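/- arXiv:2005.10020 — 8 statements merged into one kernel-verified Lean document; each statement's English description precedes it below -/
import Mathlib

section
/- Let ρ > 0. For every absolutely continuous input u : [0,T] → ℝ and every initial value w₀ with |w₀ - u(0)| ≤ ρ, there exists a unique absolutely continuous function w : [0,T] → ℝ satisfying w(0) = w₀, |u(t) - w(t)| ≤ ρ for all t ∈ [0,T], and w'(t)·(u(t) - w(t) - v) ≥ 0 for almost every t and every v with |v| ≤ ρ. -/
open MeasureTheory Set Filter

/-- `f` is absolutely continuous on `[0,T]`: it is the integral of an integrable function. -/
def AbsContOn (T : ℝ) (f : ℝ → ℝ) : Prop :=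
  ∃ f' : ℝ → ℝ, MeasureTheory.IntegrableOn f' (Set.Icc 0 T) ∧
    ∀ t ∈ Set.Icc (0:ℝ) T, f t = f 0 + ∫ s in Set.Ioc (0:ℝ) t, f' s

/-- `w` is the output of the scalar play operator with parameter `ρ` on `[0,T]`,
applied to the input `u` with initial state `w₀`, characterized by the
variational inequality: `w` is absolutely continuous, `w 0 = w₀`,
`|u - w| ≤ ρ` on `[0,T]`, and `w' (u - w - v) ≥ 0` a.e. for all `|v| ≤ ρ`. -/
def IsPlayOutput (ρ T : ℝ) (u : ℝ → ℝ) (w₀ : ℝ) (w : ℝ → ℝ) : Prop :=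
  w 0 = w₀ ∧
  ∃ w' : ℝ → ℝ, MeasureTheory.IntegrableOn w' (Set.Icc 0 T) ∧
    (∀ t ∈ Set.Icc (0:ℝ) T, w t = w₀ + ∫ s in Set.Ioc (0:ℝ) t, w' s) ∧
    (∀ t ∈ Set.Icc (0:ℝ) T, |u t - w t| ≤ ρ) ∧
    (∀ᵐ t ∂(MeasureTheory.volume.restrict (Set.Icc (0:ℝ) T)),
      ∀ v : ℝ, |v| ≤ ρ → 0 ≤ w' t * (u t - w t - v))

/-!
On a stretch where `u` oscillates by at most `2ρ`, the output touches at most one side of the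
band `|u - w| ≤ ρ`, and it is explicit: `w t = max w_a (max_{[a,t]} u - ρ)` or its mirror image.
By uniform continuity, `[0,T]` is a finite union of such stretches. The increments of `w` are
dominated by those of `t ↦ ∫₀ᵗ |u'|`, so `w` is absolutely continuous, and the variational
inequality holds at every interior time because `w` is locally monotone away from contact.
Uniqueness is an energy estimate: two outputs satisfy `(w₁ - w₂) (w₁' - w₂') ≤ 0` a.e., so
`(w₁ - w₂)²` cannot grow from its initial value `0`.
-/

open scoped Topology

def DominatedIncrements (F w : ℝ → ℝ) (a b : ℝ) : Prop :=
  ∀ s t, a ≤ s → s ≤ t → t ≤ b → |w t - w s| ≤ F t - F s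

def AntitoneOffContact (ρ : ℝ) (u : ℝ → ℝ) (a b : ℝ) (w : ℝ → ℝ) : Prop :=
  ∀ s t, a ≤ s → t ≤ b → (∀ r ∈ Icc s t, u r - w r < ρ) → AntitoneOn w (Icc s t)

/-- The monotone characterization of the play on `[a, b]`: `w` can rise only where `u - w = ρ`
and fall only where `u - w = -ρ`; the last field is the first one for the pair `(-u, -w)`. -/
structure IsPlayOn (ρ : ℝ) (u : ℝ → ℝ) (a b : ℝ) (w : ℝ → ℝ) : Prop where
  abs_sub_le : ∀ t ∈ Icc a b, |u t - w t| ≤ ρ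
  antitoneOffContact : AntitoneOffContact ρ u a b w
  monotoneOffContact : AntitoneOffContact ρ (-u) a b (-w)

variable {ρ a b σ : ℝ} {u w w₁ w₂ F : ℝ → ℝ}

namespace DominatedIncrements

lemma neg (h : DominatedIncrements F w a b) : DominatedIncrements F (-w) a b := by
  intro s t hs hst htb
  rw [Pi.neg_apply, Pi.neg_apply, neg_sub_neg, abs_sub_comm]
  exact h s t hs hst htb

lemma congr (h : DominatedIncrements F w₁ a b) (heq : EqOn w₁ w₂ (Icc a b)) :
    DominatedIncrements F w₂ a b := by
  intro s t hs hst htb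
  rw [← heq ⟨hs.trans hst, htb⟩, ← heq ⟨hs, hst.trans htb⟩]
  exact h s t hs hst htb

lemma union (h₁ : DominatedIncrements F w a σ) (h₂ : DominatedIncrements F w σ b) :
    DominatedIncrements F w a b := by
  intro s t hs hst htb
  rcases le_total t σ with htσ | hσt
  · exact h₁ s t hs hst htσ
  rcases le_total σ s with hσs | hsσ
  · exact h₂ s t hσs hst htb
  calc |w t - w s| ≤ |w t - w σ| + |w σ - w s| := abs_sub_le _ _ _
    _ ≤ (F t - F σ) + (F σ - F s) := add_le_add (h₂ σ t le_rfl hσt htb) (h₁ s σ hs hsσ le_rfl)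
    _ = F t - F s := by ring

lemma dist_le (h : DominatedIncrements F w a b) {x y : ℝ} (hx : x ∈ Icc a b)
    (hy : y ∈ Icc a b) : dist (w x) (w y) ≤ dist (F x) (F y) := by
  wlog hxy : x ≤ y generalizing x y
  · rw [dist_comm, dist_comm (F x)]
    exact this hy hx (le_of_not_ge hxy)
  rw [dist_comm, dist_comm (F x), Real.dist_eq, Real.dist_eq]
  exact (h x y hx.1 hxy hy.2).trans (le_abs_self _)

lemma absolutelyContinuousOnInterval (h : DominatedIncrements F w a b) (hab : a ≤ b)
    (hF : AbsolutelyContinuousOnInterval F a b) : AbsolutelyContinuousOnInterval w a b := by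
  rw [absolutelyContinuousOnInterval_iff] at hF ⊢
  intro ε hε
  obtain ⟨δ, hδ, hFδ⟩ := hF ε hε
  refine ⟨δ, hδ, fun E hE hlen => (Finset.sum_le_sum fun i hi => ?_).trans_lt (hFδ E hE hlen)⟩
  obtain ⟨hx, hy⟩ := hE.1 i hi
  rw [uIcc_of_le hab] at hx hy
  exact h.dist_le hx hy

end DominatedIncrements

lemma dominatedIncrements_primitive {f : ℝ → ℝ} (hf : IntegrableOn f (Icc a b)) (c : ℝ) :
    DominatedIncrements (fun t => ∫ x in a..t, |f x|) (fun t => c + ∫ x in a..t, f x) a b := by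
  intro s t hs hst htb
  have hint : ∀ g : ℝ → ℝ, IntegrableOn g (Icc a b) → ∀ x ∈ Icc a b,
      IntervalIntegrable g volume a x := fun g hg x hx =>
    (intervalIntegrable_iff_integrableOn_Icc_of_le hx.1).2
      (hg.mono_set (Icc_subset_Icc le_rfl hx.2))
  have hs' : s ∈ Icc a b := ⟨hs, hst.trans htb⟩
  have ht' : t ∈ Icc a b := ⟨hs.trans hst, htb⟩
  simp only [add_sub_add_left_eq_sub]
  rw [intervalIntegral.integral_interval_sub_left (hint f hf t ht') (hint f hf s hs'),
    intervalIntegral.integral_interval_sub_left (hint _ hf.abs t ht') (hint _ hf.abs s hs')]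
  exact intervalIntegral.abs_integral_le_integral_abs hst

namespace AntitoneOffContact

lemma congr (h : AntitoneOffContact ρ u a b w₁) (heq : EqOn w₁ w₂ (Icc a b)) :
    AntitoneOffContact ρ u a b w₂ := by
  intro s t hs htb hlt
  have heq' : EqOn w₁ w₂ (Icc s t) := heq.mono (Icc_subset_Icc hs htb)
  exact (h s t hs htb fun r hr => heq' hr ▸ hlt r hr).congr heq'

lemma union (h₁ : AntitoneOffContact ρ u a σ w) (h₂ : AntitoneOffContact ρ u σ b w) :
    AntitoneOffContact ρ u a b w := by
  intro s t hs htb hlt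
  rcases le_total t σ with htσ | hσt
  · exact h₁ s t hs htσ hlt
  rcases le_total σ s with hσs | hsσ
  · exact h₂ s t hσs htb hlt
  rw [← Icc_union_Icc_eq_Icc hsσ hσt]
  exact (h₁ s σ hs le_rfl fun r hr => hlt r ⟨hr.1, hr.2.trans hσt⟩).union_right
    (h₂ σ t le_rfl htb fun r hr => hlt r ⟨hsσ.trans hr.1, hr.2⟩)
    (isGreatest_Icc hsσ) (isLeast_Icc hσt)

end AntitoneOffContact

namespace IsPlayOn

lemma neg (h : IsPlayOn ρ u a b w) : IsPlayOn ρ (-u) a b (-w) where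
  abs_sub_le t ht := by
    rw [Pi.neg_apply, Pi.neg_apply, neg_sub_neg, abs_sub_comm]
    exact h.abs_sub_le t ht
  antitoneOffContact := h.monotoneOffContact
  monotoneOffContact := by simpa only [neg_neg] using h.antitoneOffContact

lemma congr (h : IsPlayOn ρ u a b w₁) (heq : EqOn w₁ w₂ (Icc a b)) : IsPlayOn ρ u a b w₂ where
  abs_sub_le t ht := heq ht ▸ h.abs_sub_le t ht
  antitoneOffContact := h.antitoneOffContact.congr heq
  monotoneOffContact := h.monotoneOffContact.congr fun _ ht => congrArg Neg.neg (heq ht)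

lemma union (h₁ : IsPlayOn ρ u a σ w) (h₂ : IsPlayOn ρ u σ b w) : IsPlayOn ρ u a b w where
  abs_sub_le t ht := by
    rcases le_total t σ with htσ | hσt
    · exact h₁.abs_sub_le t ⟨ht.1, htσ⟩
    · exact h₂.abs_sub_le t ⟨hσt, ht.2⟩
  antitoneOffContact := h₁.antitoneOffContact.union h₂.antitoneOffContact
  monotoneOffContact := h₁.monotoneOffContact.union h₂.monotoneOffContact

end IsPlayOn

noncomputable def upperPlay (ρ : ℝ) (u : ℝ → ℝ) (a wa t : ℝ) : ℝ := max wa (sSup (u '' Icc a t) - ρ)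

section UpperPlay

variable {wa : ℝ}

lemma le_sSup_image_Icc (hu : ContinuousOn u (Icc a b)) {r t : ℝ} (hr : r ∈ Icc a t)
    (htb : t ≤ b) : u r ≤ sSup (u '' Icc a t) :=
  le_csSup ((isCompact_Icc.image_of_continuousOn (hu.mono (Icc_subset_Icc le_rfl htb))).bddAbove)
    (mem_image_of_mem u hr)

lemma exists_eq_sSup_image_Icc (hu : ContinuousOn u (Icc a b)) {t : ℝ} (hat : a ≤ t)
    (htb : t ≤ b) : ∃ r ∈ Icc a t, u r = sSup (u '' Icc a t) :=
  (isCompact_Icc.image_of_continuousOn (hu.mono (Icc_subset_Icc le_rfl htb))).sSup_mem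
    ((nonempty_Icc.2 hat).image u)

lemma upperPlay_left (h : u a - ρ ≤ wa) : upperPlay ρ u a wa a = wa := by
  simpa [upperPlay, Icc_self, image_singleton, csSup_singleton] using h

lemma sub_le_upperPlay (hu : ContinuousOn u (Icc a b)) {t : ℝ} (ht : t ∈ Icc a b) :
    u t - ρ ≤ upperPlay ρ u a wa t :=
  (sub_le_sub_right (le_sSup_image_Icc hu ⟨ht.1, le_rfl⟩ ht.2) ρ).trans (le_max_right _ _)

lemma monotoneOn_upperPlay (hu : ContinuousOn u (Icc a b)) :
    MonotoneOn (upperPlay ρ u a wa) (Icc a b) := fun _ hs _ ht hst =>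
  max_le_max le_rfl <| sub_le_sub_right (csSup_le_csSup
    ((isCompact_Icc.image_of_continuousOn (hu.mono (Icc_subset_Icc le_rfl ht.2))).bddAbove)
    ((nonempty_Icc.2 hs.1).image u) (image_mono (Icc_subset_Icc le_rfl hst))) ρ

/-- Above `wa`, `upperPlay` at time `q` equals `u r - ρ` for a maximizing time `r ≤ q`: either
`r ≤ p` and there was no rise, or `r ∈ [p, q]` is a contact time. -/
lemma upperPlay_le_of_forall_lt (hu : ContinuousOn u (Icc a b)) {p q : ℝ} (hp : a ≤ p)
    (hpq : p ≤ q) (hqb : q ≤ b) (hlt : ∀ r ∈ Icc p q, u r - upperPlay ρ u a wa r < ρ) :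
    upperPlay ρ u a wa q ≤ upperPlay ρ u a wa p := by
  set w := upperPlay ρ u a wa
  by_contra! hpq'
  obtain ⟨r, hr, hur⟩ := exists_eq_sSup_image_Icc hu (hp.trans hpq) hqb
  have hwq : w q = u r - ρ := by
    rw [hur]
    refine (max_eq_right_iff.2 ?_)
    by_contra! h
    exact hpq'.not_ge ((max_eq_left h.le).trans_le (le_max_left _ _))
  rcases le_total r p with hrp | hpr
  · have := sub_le_upperPlay (ρ := ρ) (wa := wa) hu ⟨hp, hpq.trans hqb⟩
    have := le_sSup_image_Icc hu ⟨hr.1, hrp⟩ (hpq.trans hqb)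
    have : sSup (u '' Icc a p) - ρ ≤ w p := le_max_right _ _
    linarith
  · have := monotoneOn_upperPlay (ρ := ρ) (wa := wa) hu ⟨hr.1, hr.2.trans hqb⟩
      ⟨hp.trans hpq, hqb⟩ hr.2
    have := hlt r ⟨hpr, hr.2⟩
    linarith

lemma isPlayOn_upperPlay (hu : ContinuousOn u (Icc a b))
    (hosc : ∀ s ∈ Icc a b, ∀ t ∈ Icc a b, u s - u t ≤ 2 * ρ)
    (hwa : ∀ t ∈ Icc a b, wa - u t ≤ ρ) : IsPlayOn ρ u a b (upperPlay ρ u a wa) where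
  abs_sub_le t ht := by
    refine abs_le.2 ⟨?_, by linarith [sub_le_upperPlay (ρ := ρ) (wa := wa) hu ht]⟩
    obtain ⟨r, hr, hur⟩ := exists_eq_sSup_image_Icc hu ht.1 ht.2
    have : upperPlay ρ u a wa t ≤ u t + ρ := by
      refine max_le (by linarith [hwa t ht]) ?_
      rw [← hur]
      linarith [hosc r ⟨hr.1, hr.2.trans ht.2⟩ t ht]
    linarith
  antitoneOffContact s t hs htb hlt p hp q hq hpq :=
    upperPlay_le_of_forall_lt hu (hs.trans hp.1) hpq (hq.2.trans htb)
      fun r hr => hlt r ⟨hp.1.trans hr.1, hr.2.trans hq.2⟩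
  monotoneOffContact s t hs htb _ :=
    ((monotoneOn_upperPlay hu).mono (Icc_subset_Icc hs htb)).neg

lemma dominatedIncrements_upperPlay (hu : ContinuousOn u (Icc a b))
    (hmod : DominatedIncrements F u a b) :
    DominatedIncrements F (upperPlay ρ u a wa) a b := by
  intro s t hs hst htb
  set w := upperPlay ρ u a wa
  have hF : ∀ p q, a ≤ p → p ≤ q → q ≤ b → 0 ≤ F q - F p := fun p q hp hpq hqb =>
    (abs_nonneg _).trans (hmod p q hp hpq hqb)
  have hws : w s ≤ w t := monotoneOn_upperPlay hu ⟨hs, hst.trans htb⟩ ⟨hs.trans hst, htb⟩ hst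
  rw [abs_of_nonneg (sub_nonneg.2 hws), sub_le_iff_le_add']
  obtain ⟨r, hr, hur⟩ := exists_eq_sSup_image_Icc hu (hs.trans hst) htb
  refine max_le ?_ ?_
  · have : wa ≤ w s := le_max_left _ _
    linarith [hF s t hs hst htb]
  rw [← hur]
  rcases le_total r s with hrs | hsr
  · have := le_sSup_image_Icc hu ⟨hr.1, hrs⟩ (hst.trans htb)
    have : sSup (u '' Icc a s) - ρ ≤ w s := le_max_right _ _
    linarith [hF s t hs hst htb]
  · have := le_of_abs_le (hmod s r hs hsr (hr.2.trans htb))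
    have := hF r t (hs.trans hsr) hr.2 htb
    have := sub_le_upperPlay (ρ := ρ) (wa := wa) hu ⟨hs, hst.trans htb⟩
    linarith

end UpperPlay

/-- On an interval where `u` oscillates by at most `2ρ`, the output touches at most one of the
two boundaries of the admissible band, so it is given by `upperPlay` or by its reflection. -/
lemma exists_playOn_of_oscillation_le (hu : ContinuousOn u (Icc a b))
    (hmod : DominatedIncrements F u a b)
    (hosc : ∀ s ∈ Icc a b, ∀ t ∈ Icc a b, u s - u t ≤ 2 * ρ) {wa : ℝ} (hwa : |u a - wa| ≤ ρ) :
    ∃ w, w a = wa ∧ IsPlayOn ρ u a b w ∧ DominatedIncrements F w a b := by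
  by_cases hup : ∀ t ∈ Icc a b, wa - u t ≤ ρ
  · exact ⟨upperPlay ρ u a wa, upperPlay_left (by linarith [le_abs_self (u a - wa)]),
      isPlayOn_upperPlay hu hosc hup, dominatedIncrements_upperPlay hu hmod⟩
  push Not at hup
  obtain ⟨t₀, ht₀, hwt₀⟩ := hup
  have hu' : ContinuousOn (-u) (Icc a b) := hu.neg
  have hmod' : DominatedIncrements F (-u) a b := hmod.neg
  have hosc' : ∀ s ∈ Icc a b, ∀ t ∈ Icc a b, (-u) s - (-u) t ≤ 2 * ρ := fun s hs t ht => by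
    simpa only [Pi.neg_apply, neg_sub_neg] using hosc t ht s hs
  have hdown : ∀ t ∈ Icc a b, -wa - (-u) t ≤ ρ := fun t ht => by
    simp only [Pi.neg_apply]
    linarith [hosc t ht t₀ ht₀]
  refine ⟨-upperPlay ρ (-u) a (-wa), ?_, ?_, ?_⟩
  · have : (-u) a - ρ ≤ -wa := by
      simp only [Pi.neg_apply]
      linarith [neg_abs_le (u a - wa)]
    rw [Pi.neg_apply, upperPlay_left this, neg_neg]
  · simpa only [neg_neg] using (isPlayOn_upperPlay hu' hosc' hdown).neg
  · exact (dominatedIncrements_upperPlay hu' hmod').neg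

lemma exists_playOn_union {wa : ℝ} (haσ : a ≤ σ)
    (h₁ : ∃ w, w a = wa ∧ IsPlayOn ρ u a σ w ∧ DominatedIncrements F w a σ)
    (h₂ : ∀ wσ, |u σ - wσ| ≤ ρ →
      ∃ w, w σ = wσ ∧ IsPlayOn ρ u σ b w ∧ DominatedIncrements F w σ b) :
    ∃ w, w a = wa ∧ IsPlayOn ρ u a b w ∧ DominatedIncrements F w a b := by
  obtain ⟨w₁, hw₁a, hw₁, hw₁F⟩ := h₁
  obtain ⟨w₂, hw₂σ, hw₂, hw₂F⟩ := h₂ (w₁ σ) (hw₁.abs_sub_le σ ⟨haσ, le_rfl⟩)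
  have heq₁ : EqOn w₁ (fun t => if t ≤ σ then w₁ t else w₂ t) (Icc a σ) :=
    fun t ht => (if_pos ht.2).symm
  have heq₂ : EqOn w₂ (fun t => if t ≤ σ then w₁ t else w₂ t) (Icc σ b) := by
    intro t ht
    rcases ht.1.eq_or_lt with rfl | hlt
    · simp [hw₂σ]
    · simp [not_le.2 hlt]
  exact ⟨_, by simp [haσ, hw₁a], (hw₁.congr heq₁).union (hw₂.congr heq₂),
    (hw₁F.congr heq₁).union (hw₂F.congr heq₂)⟩

lemma exists_playOn (hρ : 0 < ρ) (hab : a ≤ b) (hu : ContinuousOn u (Icc a b))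
    (hmod : DominatedIncrements F u a b) {wa : ℝ} (hwa : |u a - wa| ≤ ρ) :
    ∃ w, w a = wa ∧ IsPlayOn ρ u a b w ∧ DominatedIncrements F w a b := by
  obtain ⟨δ, hδ, hclose⟩ := Metric.uniformContinuousOn_iff_le.1
    (isCompact_Icc.uniformContinuousOn_of_continuous hu) (2 * ρ) (by positivity)
  have hpiece : ∀ c d, a ≤ c → c ≤ d → d ≤ b → d - c ≤ δ → ∀ wc, |u c - wc| ≤ ρ →
      ∃ w, w c = wc ∧ IsPlayOn ρ u c d w ∧ DominatedIncrements F w c d := by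
    intro c d hac hcd hdb hdc wc hwc
    have hsub : Icc c d ⊆ Icc a b := Icc_subset_Icc hac hdb
    refine exists_playOn_of_oscillation_le (hu.mono hsub)
      (fun s t hs hst htd => hmod s t (hac.trans hs) hst (htd.trans hdb))
      (fun s hs t ht => ?_) hwc
    have := hclose s (hsub hs) t (hsub ht) (by
      rw [Real.dist_eq, abs_le]; constructor <;> linarith [hs.1, hs.2, ht.1, ht.2])
    rw [Real.dist_eq] at this
    exact le_of_abs_le this
  have hstep : ∀ n : ℕ, ∀ c, a ≤ c → c ≤ b → c ≤ a + n * δ →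
      ∃ w, w a = wa ∧ IsPlayOn ρ u a c w ∧ DominatedIncrements F w a c := by
    intro n
    induction n with
    | zero =>
      intro c hac hcb hc
      simp only [Nat.cast_zero, zero_mul, add_zero] at hc
      exact hpiece a c le_rfl hac hcb (by linarith) wa hwa
    | succ n ih =>
      intro c hac hcb hc
      set c' := max a (c - δ)
      have hac' : a ≤ c' := le_max_left _ _
      have hc'c : c' ≤ c := max_le hac (by linarith)
      refine exists_playOn_union hac' (ih c' hac' (hc'c.trans hcb)
        (max_le (le_add_of_nonneg_right (by positivity)) (by push_cast at hc; linarith)))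
        (hpiece c' c hac' hc'c hcb (by linarith [le_max_right a (c - δ)]))
  obtain ⟨n, hn⟩ := exists_nat_ge ((b - a) / δ)
  exact hstep n b hab le_rfl (by rw [div_le_iff₀ hδ] at hn; linarith)

namespace IsPlayOn

variable {t : ℝ}

lemma deriv_nonpos (h : IsPlayOn ρ u a b w) (hu : ContinuousAt u t) (hw : ContinuousAt w t)
    (ht : t ∈ Ioo a b) (hlt : u t - w t < ρ) : deriv w t ≤ 0 := by
  have hnhds : {r | u r - w r < ρ} ∩ Ioo a b ∈ 𝓝 t :=
    inter_mem ((hu.sub hw).eventually (gt_mem_nhds hlt)) (Ioo_mem_nhds ht.1 ht.2)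
  obtain ⟨s, s', hts, hmem, hsub⟩ := exists_Icc_mem_subset_of_mem_nhds hnhds
  have hanti := h.antitoneOffContact s s' (hsub ⟨le_rfl, hts.1.trans hts.2⟩).2.1.le
    (hsub ⟨hts.1.trans hts.2, le_rfl⟩).2.2.le fun r hr => (hsub hr).1
  rw [← derivWithin_of_mem_nhds hmem]
  exact hanti.derivWithin_nonpos

lemma deriv_nonneg (h : IsPlayOn ρ u a b w) (hu : ContinuousAt u t) (hw : ContinuousAt w t)
    (ht : t ∈ Ioo a b) (hgt : -ρ < u t - w t) : 0 ≤ deriv w t := by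
  have := h.neg.deriv_nonpos hu.neg hw.neg ht (by simp only [Pi.neg_apply]; linarith)
  simpa using this

lemma deriv_mul_sub_nonneg (h : IsPlayOn ρ u a b w) (hu : ContinuousAt u t)
    (hw : ContinuousAt w t) (ht : t ∈ Ioo a b) {v : ℝ} (hv : |v| ≤ ρ) :
    0 ≤ deriv w t * (u t - w t - v) := by
  obtain ⟨hv₁, hv₂⟩ := abs_le.1 hv
  obtain ⟨hx₁, hx₂⟩ := abs_le.1 (h.abs_sub_le t (Ioo_subset_Icc_self ht))
  rcases lt_or_ge (u t - w t) ρ with hlt | hge <;>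
    rcases lt_or_ge (-ρ) (u t - w t) with hgt | hle
  · rw [le_antisymm (h.deriv_nonpos hu hw ht hlt) (h.deriv_nonneg hu hw ht hgt), zero_mul]
  · exact mul_nonneg_of_nonpos_of_nonpos (h.deriv_nonpos hu hw ht hlt) (by linarith)
  · exact mul_nonneg (h.deriv_nonneg hu hw ht hgt) (by linarith)
  · rw [show u t - w t - v = 0 by linarith, mul_zero]

end IsPlayOn

lemma exists_isPlayOutput {T w₀ : ℝ} (hρ : 0 < ρ) (hT : 0 ≤ T) (hu : AbsContOn T u)
    (hw₀ : |w₀ - u 0| ≤ ρ) : ∃ w, IsPlayOutput ρ T u w₀ w := by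
  obtain ⟨u', hu'int, hu'rep⟩ := hu
  set F : ℝ → ℝ := fun t => ∫ x in 0..t, |u' x|
  have hF : AbsolutelyContinuousOnInterval F 0 T :=
    ((intervalIntegrable_iff_integrableOn_Icc_of_le hT).2
      hu'int.abs).absolutelyContinuousOnInterval_intervalIntegral left_mem_uIcc
  have hmod : DominatedIncrements F u 0 T :=
    (dominatedIncrements_primitive hu'int (u 0)).congr fun t ht => by
      rw [hu'rep t ht, ← intervalIntegral.integral_of_le ht.1]
  have hucont : ContinuousOn u (Icc 0 T) := by
    simpa [uIcc_of_le hT] using (hmod.absolutelyContinuousOnInterval hT hF).continuousOn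
  obtain ⟨w, hw0, hw, hwF⟩ := exists_playOn hρ hT hucont hmod (by rwa [abs_sub_comm])
  have hwAC := hwF.absolutelyContinuousOnInterval hT hF
  have hwcont : ContinuousOn w (Icc 0 T) := by simpa [uIcc_of_le hT] using hwAC.continuousOn
  refine ⟨w, hw0, deriv w,
    (intervalIntegrable_iff_integrableOn_Icc_of_le hT).1 hwAC.intervalIntegrable_deriv,
    fun t ht => ?_, hw.abs_sub_le, ?_⟩
  · rw [← intervalIntegral.integral_of_le ht.1,
      (hwAC.mono (uIcc_subset_uIcc left_mem_uIcc ?_)).integral_deriv_eq_sub, hw0]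
    · ring
    · rwa [uIcc_of_le hT]
  · rw [← Measure.restrict_congr_set Ioo_ae_eq_Icc]
    filter_upwards [ae_restrict_mem measurableSet_Ioo] with t ht v hv
    exact hw.deriv_mul_sub_nonneg (hucont.continuousAt (Icc_mem_nhds ht.1 ht.2))
      (hwcont.continuousAt (Icc_mem_nhds ht.1 ht.2)) ht hv

/-- An energy estimate: `H = ∫ g` vanishes at `a` and `(H²)' = 2 H g ≤ 0`. -/
lemma intervalIntegral_eq_zero_of_ae_mul_nonpos {g : ℝ → ℝ} (hab : a ≤ b)
    (hg : IntervalIntegrable g volume a b)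
    (h : ∀ᵐ x ∂volume.restrict (Ioc a b), (∫ y in a..x, g y) * g x ≤ 0) :
    ∫ y in a..b, g y = 0 := by
  set H : ℝ → ℝ := fun x => ∫ y in a..x, g y
  have hH : AbsolutelyContinuousOnInterval H a b :=
    hg.absolutelyContinuousOnInterval_intervalIntegral left_mem_uIcc
  have hderiv : ∀ᵐ x ∂volume.restrict (Ioc a b), deriv (H * H) x = 2 * (H x * g x) := by
    filter_upwards [ae_restrict_of_ae hg.ae_hasDerivAt_integral, ae_restrict_mem measurableSet_Ioc]
      with x hx hmem
    have hd := hx (by rw [uIcc_of_le hab]; exact Ioc_subset_Icc_self hmem) a left_mem_uIcc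
    rw [(hd.mul hd).deriv]
    ring
  have hsq : ∫ x in a..b, deriv (H * H) x = H b * H b := by
    rw [(hH.mul hH).integral_deriv_eq_sub]
    simp [H]
  have hnonpos : ∫ x in a..b, deriv (H * H) x ≤ 0 := by
    rw [intervalIntegral.integral_of_le hab]
    refine integral_nonpos_of_ae ?_
    filter_upwards [hderiv, h] with x h₁ h₂
    rw [h₁]
    simp only [Pi.zero_apply]
    linarith
  exact mul_self_eq_zero.1 (le_antisymm (hsq ▸ hnonpos) (mul_self_nonneg _))

lemma IsPlayOutput.eqOn {T w₀ : ℝ} (h₁ : IsPlayOutput ρ T u w₀ w₁)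
    (h₂ : IsPlayOutput ρ T u w₀ w₂) : EqOn w₁ w₂ (Icc 0 T) := by
  obtain ⟨-, w₁', hint₁, hrep₁, hb₁, hvi₁⟩ := h₁
  obtain ⟨-, w₂', hint₂, hrep₂, hb₂, hvi₂⟩ := h₂
  have hsub : ∀ t ∈ Icc (0 : ℝ) T, Ioc 0 t ⊆ Icc 0 T := fun t ht =>
    Ioc_subset_Icc_self.trans (Icc_subset_Icc le_rfl ht.2)
  have hdiff : ∀ t ∈ Icc 0 T, w₁ t - w₂ t = ∫ x in 0..t, (w₁' x - w₂' x) := by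
    intro t ht
    rw [intervalIntegral.integral_of_le ht.1,
      integral_sub (hint₁.mono_set (hsub t ht)) (hint₂.mono_set (hsub t ht)), hrep₁ t ht,
      hrep₂ t ht]
    ring
  intro t ht
  rw [← sub_eq_zero, hdiff t ht]
  refine intervalIntegral_eq_zero_of_ae_mul_nonpos ht.1
    ((intervalIntegrable_iff_integrableOn_Ioc_of_le ht.1).2
      ((hint₁.sub hint₂).mono_set (hsub t ht))) ?_
  filter_upwards [ae_restrict_of_ae_restrict_of_subset (hsub t ht) hvi₁,
    ae_restrict_of_ae_restrict_of_subset (hsub t ht) hvi₂, ae_restrict_mem measurableSet_Ioc]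
    with x hv₁ hv₂ hx
  have hxT : x ∈ Icc 0 T := hsub t ht hx
  rw [← hdiff x hxT]
  have k₁ := hv₁ _ (hb₂ x hxT)
  have k₂ := hv₂ _ (hb₁ x hxT)
  linarith

/-- Existence and uniqueness of the play operator output for absolutely
continuous inputs with admissible initial state. -/
theorem play_exists_unique (ρ T : ℝ) (hρ : 0 < ρ) (hT : 0 ≤ T)
    (u : ℝ → ℝ) (hu : AbsContOn T u) (w₀ : ℝ) (hw₀ : |w₀ - u 0| ≤ ρ) :
    ∃ w : ℝ → ℝ, IsPlayOutput ρ T u w₀ w ∧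
      ∀ w₂ : ℝ → ℝ, IsPlayOutput ρ T u w₀ w₂ → Set.EqOn w₂ w (Set.Icc 0 T) := by
  obtain ⟨w, hw⟩ := exists_isPlayOutput hρ hT hu hw₀
  exact ⟨w, hw, fun w₂ h₂ => h₂.eqOn hw⟩
end

section
/- The play operator is Lipschitz continuous: there exists L > 0 such that for all admissible pairs (u, w₀¹) and (v, w₀²) of absolutely continuous inputs with initial states, ‖𝒫[u,w₀¹] - 𝒫[v,w₀²]‖_{C⁰([0,T])} ≤ L(‖u - v‖_{C⁰([0,T])} + |w₀¹ - w₀²|). In fact one may take L = 1 for the uniform norm. -/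
open MeasureTheory Set Filter

/-! Testing the variational inequality of each output with the other's `u - w` gives
`(w₁' - w₂') ((u - v) - (w₁ - w₂)) ≥ 0` a.e., so `d = w₁ - w₂` is nonincreasing wherever
`d > u - v`. An absolutely continuous function that is nonincreasing above the level
`c = sup |u - v| + |d 0| ≥ d 0` never rises above it; exchanging the roles of the two outputs
bounds `-d` as well. -/

section Primitive

variable {T a : ℝ} {f g : ℝ → ℝ}

lemma continuousOn_of_eq_add_setIntegral (hg : IntegrableOn g (Icc 0 T))
    (hf : ∀ t ∈ Icc (0:ℝ) T, f t = a + ∫ s in Ioc 0 t, g s) : ContinuousOn f (Icc 0 T) :=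
  (continuousOn_const.add (intervalIntegral.continuousOn_primitive hg)).congr hf

lemma AbsContOn.continuousOn (hf : AbsContOn T f) : ContinuousOn f (Icc 0 T) := by
  obtain ⟨f', hf', hrep⟩ := hf
  exact continuousOn_of_eq_add_setIntegral hf' hrep

lemma sub_eq_setIntegral_Ioc_of_eq_add_setIntegral (hg : IntegrableOn g (Icc 0 T))
    (hf : ∀ t ∈ Icc (0:ℝ) T, f t = a + ∫ s in Ioc 0 t, g s) {r t : ℝ} (hr : 0 ≤ r)
    (hrt : r ≤ t) (ht : t ≤ T) : f t - f r = ∫ s in Ioc r t, g s := by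
  have hsplit : ∫ s in Ioc 0 t, g s = (∫ s in Ioc 0 r, g s) + ∫ s in Ioc r t, g s := by
    rw [← setIntegral_union (Ioc_disjoint_Ioc_of_le le_rfl) measurableSet_Ioc
      (hg.mono_set (Ioc_subset_Icc_self.trans (Icc_subset_Icc_right (hrt.trans ht))))
      (hg.mono_set (Ioc_subset_Icc_self.trans (Icc_subset_Icc hr ht))),
      Ioc_union_Ioc_eq_Ioc hr hrt]
  rw [hf t ⟨hr.trans hrt, ht⟩, hf r ⟨hr, hrt.trans ht⟩, hsplit]
  ring

lemma le_of_eq_add_setIntegral_of_ae_nonpos {c : ℝ} (hg : IntegrableOn g (Icc 0 T))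
    (hf : ∀ t ∈ Icc (0:ℝ) T, f t = a + ∫ s in Ioc 0 t, g s) (ha : a ≤ c)
    (hdec : ∀ᵐ s ∂volume.restrict (Icc 0 T), c < f s → g s ≤ 0) :
    ∀ t ∈ Icc (0:ℝ) T, f t ≤ c := by
  intro t ht
  by_contra! hct
  -- `r` is the last time before `t` at which `f ≤ c`.
  set K := Icc 0 t ∩ f ⁻¹' Iic c
  have hK : IsCompact K := isCompact_Icc.of_isClosed_subset
    (((continuousOn_of_eq_add_setIntegral hg hf).mono (Icc_subset_Icc_right ht.2)
      ).preimage_isClosed_of_isClosed isClosed_Icc isClosed_Iic) inter_subset_left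
  have hf0 : f 0 = a := by simpa using hf 0 ⟨le_rfl, ht.1.trans ht.2⟩
  obtain ⟨r, ⟨⟨hr0, hrt⟩, hrc⟩, hr_max⟩ :=
    hK.exists_isGreatest ⟨0, ⟨le_rfl, ht.1⟩, hf0.trans_le ha⟩
  have habove : ∀ s ∈ Ioc r t, c < f s := fun s hs => by
    by_contra! hsc
    exact (hs.1.trans_le (hr_max ⟨⟨hr0.trans hs.1.le, hs.2⟩, hsc⟩)).false
  have hIoc : Ioc r t ⊆ Icc 0 T := fun s hs => ⟨hr0.trans hs.1.le, hs.2.trans ht.2⟩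
  have hnonpos : ∫ s in Ioc r t, g s ≤ 0 := by
    refine integral_nonpos_of_ae ?_
    filter_upwards [ae_restrict_of_ae_restrict_of_subset hIoc hdec,
      ae_restrict_mem measurableSet_Ioc] with s hs hsmem
    exact hs (habove s hsmem)
  have := sub_eq_setIntegral_Ioc_of_eq_add_setIntegral hg hf hr0 hrt ht.2
  linarith [show f r ≤ c from hrc]

end Primitive

section Play

variable {ρ T w₀₁ w₀₂ : ℝ} {u v w₁ w₂ : ℝ → ℝ}

lemma IsPlayOutput.sub_le (h₁ : IsPlayOutput ρ T u w₀₁ w₁) (h₂ : IsPlayOutput ρ T v w₀₂ w₂)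
    {S : ℝ} (hS0 : 0 ≤ S) (hS : ∀ s ∈ Icc (0:ℝ) T, u s - v s ≤ S) :
    ∀ t ∈ Icc (0:ℝ) T, w₁ t - w₂ t ≤ S + |w₀₁ - w₀₂| := by
  obtain ⟨-, w₁', hint₁, hrep₁, hbd₁, hvi₁⟩ := h₁
  obtain ⟨-, w₂', hint₂, hrep₂, hbd₂, hvi₂⟩ := h₂
  have hrep : ∀ t ∈ Icc (0:ℝ) T,
      w₁ t - w₂ t = (w₀₁ - w₀₂) + ∫ s in Ioc 0 t, (w₁' s - w₂' s) := fun t ht => by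
    have hsub : Ioc 0 t ⊆ Icc 0 T := Ioc_subset_Icc_self.trans (Icc_subset_Icc_right ht.2)
    rw [hrep₁ t ht, hrep₂ t ht, integral_sub (hint₁.mono_set hsub) (hint₂.mono_set hsub)]
    ring
  refine le_of_eq_add_setIntegral_of_ae_nonpos (hint₁.sub hint₂) hrep
    ((le_abs_self _).trans (le_add_of_nonneg_left hS0)) ?_
  filter_upwards [hvi₁, hvi₂, ae_restrict_mem measurableSet_Icc] with s hs₁ hs₂ hs hc
  have hmono : 0 ≤ (w₁' s - w₂' s) * ((u s - v s) - (w₁ s - w₂ s)) := by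
    nlinarith [hs₁ _ (hbd₂ s hs), hs₂ _ (hbd₁ s hs)]
  have hneg : (u s - v s) - (w₁ s - w₂ s) < 0 := by
    linarith [hS s hs, abs_nonneg (w₀₁ - w₀₂)]
  exact nonpos_of_mul_nonneg_left hmono hneg

end Play

theorem play_lipschitz_general (ρ T : ℝ) :
    ∃ L : ℝ, 0 < L ∧ L = 1 ∧
      ∀ (u v : ℝ → ℝ) (w₀₁ w₀₂ : ℝ),
        AbsContOn T u → AbsContOn T v →
        |w₀₁ - u 0| ≤ ρ → |w₀₂ - v 0| ≤ ρ →
        ∀ (w₁ w₂ : ℝ → ℝ),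
          IsPlayOutput ρ T u w₀₁ w₁ → IsPlayOutput ρ T v w₀₂ w₂ →
          ∀ t ∈ Set.Icc (0:ℝ) T,
            |w₁ t - w₂ t| ≤
              L * (sSup ((fun s => |u s - v s|) '' Set.Icc (0:ℝ) T) + |w₀₁ - w₀₂|) := by
  refine ⟨1, one_pos, rfl, fun u v w₀₁ w₀₂ hu hv _ _ w₁ w₂ h₁ h₂ t ht => ?_⟩
  set S := sSup ((fun s => |u s - v s|) '' Icc (0:ℝ) T)
  have hbdd : BddAbove ((fun s => |u s - v s|) '' Icc (0:ℝ) T) :=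
    isCompact_Icc.bddAbove_image (hu.continuousOn.sub hv.continuousOn).abs
  have hS : ∀ s ∈ Icc (0:ℝ) T, |u s - v s| ≤ S := fun s hs => le_csSup hbdd (mem_image_of_mem _ hs)
  have hS0 : 0 ≤ S := Real.sSup_nonneg (by rintro _ ⟨s, -, rfl⟩; exact abs_nonneg _)
  rw [one_mul, abs_sub_le_iff]
  refine ⟨h₁.sub_le h₂ hS0 (fun s hs => (le_abs_self _).trans (hS s hs)) t ht, ?_⟩
  rw [abs_sub_comm w₀₁]
  exact h₂.sub_le h₁ hS0 (fun s hs => by linarith [neg_le_abs (u s - v s), hS s hs]) t ht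

/-- Lipschitz continuity of the play operator in the uniform norm, with constant `L = 1`:
`‖𝒫[u,w₀¹] - 𝒫[v,w₀²]‖_∞ ≤ L (‖u - v‖_∞ + |w₀¹ - w₀²|)`. -/
theorem play_lipschitz (ρ T : ℝ) (hρ : 0 < ρ) (hT : 0 ≤ T) :
    ∃ L : ℝ, 0 < L ∧ L = 1 ∧
      ∀ (u v : ℝ → ℝ) (w₀₁ w₀₂ : ℝ),
        AbsContOn T u → AbsContOn T v →
        |w₀₁ - u 0| ≤ ρ → |w₀₂ - v 0| ≤ ρ →
        ∀ (w₁ w₂ : ℝ → ℝ),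
          IsPlayOutput ρ T u w₀₁ w₁ → IsPlayOutput ρ T v w₀₂ w₂ →
          ∀ t ∈ Set.Icc (0:ℝ) T,
            |w₁ t - w₂ t| ≤
              L * (sSup ((fun s => |u s - v s|) '' Set.Icc (0:ℝ) T) + |w₀₁ - w₀₂|) :=
  play_lipschitz_general ρ T
end

section
/- If u is absolutely continuous and nondecreasing on an interval [a,b] ⊆ [0,T] and the play output satisfies w(a) = u(a) - ρ, then w(t) = u(t) - ρ for all t ∈ [a,b]. -/
open MeasureTheory Set Filter

/-! If `w` ever left the boundary `u - ρ` at some `t₀`, let `s` be the last contact time before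
`t₀`. Off the boundary the variational inequality with `v = ρ` forces `w' ≤ 0`, so
`w t₀ ≤ w s = u s - ρ ≤ u t₀ - ρ`, contradicting `w ≥ u - ρ`. -/

theorem eqOn_Icc_of_monotone_barrier {a b : ℝ} {w ℓ : ℝ → ℝ}
    (hw : ContinuousOn w (Icc a b)) (hℓ : MonotoneOn ℓ (Icc a b))
    (hle : ∀ t ∈ Icc a b, ℓ t ≤ w t) (hstart : w a = ℓ a)
    (hnoninc : ∀ s ∈ Icc a b, ∀ t ∈ Icc a b, s ≤ t → (∀ r ∈ Ioc s t, ℓ r < w r) → w t ≤ w s) :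
    EqOn w ℓ (Icc a b) := by
  intro t₀ ht₀
  by_contra hne
  have hlt : ℓ t₀ < w t₀ := lt_of_le_of_ne (hle t₀ ht₀) (Ne.symm hne)
  have hsub : Icc a t₀ ⊆ Icc a b := Icc_subset_Icc_right ht₀.2
  set S := {t ∈ Icc a t₀ | w t ≤ ℓ t}
  have haS : a ∈ S := ⟨⟨le_rfl, ht₀.1⟩, hstart.le⟩
  have hS_bdd : BddAbove S := ⟨t₀, fun t ht => ht.1.2⟩
  set s := sSup S
  have hs : s ∈ Icc a t₀ := ⟨le_csSup hS_bdd haS, csSup_le ⟨a, haS⟩ fun t ht => ht.1.2⟩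
  -- `ℓ` need not be continuous: `S` lies left of `s`, where `ℓ ≤ ℓ s`.
  have hws : w s ≤ ℓ s := by
    have hclosed : IsClosed (Icc a t₀ ∩ w ⁻¹' Iic (ℓ s)) :=
      (hw.mono hsub).preimage_isClosed_of_isClosed isClosed_Icc isClosed_Iic
    have hS_sub : S ⊆ Icc a t₀ ∩ w ⁻¹' Iic (ℓ s) := fun t ht =>
      ⟨ht.1, ht.2.trans (hℓ (hsub ht.1) (hsub hs) (le_csSup hS_bdd ht))⟩
    exact ((hclosed.closure_subset_iff.mpr hS_sub) (csSup_mem_closure ⟨a, haS⟩ hS_bdd)).2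
  have habove : ∀ r ∈ Ioc s t₀, ℓ r < w r := fun r hr =>
    lt_of_not_ge fun h => (not_le.mpr hr.1) (le_csSup hS_bdd ⟨⟨hs.1.trans hr.1.le, hr.2⟩, h⟩)
  have hdrop := hnoninc s (hsub hs) t₀ ht₀ hs.2 habove
  have hrise := hℓ (hsub hs) ht₀ hs.2
  linarith

namespace IsPlayOutput

variable {ρ T w₀ : ℝ} {u w : ℝ → ℝ}

theorem continuousOn (hw : IsPlayOutput ρ T u w₀ w) : ContinuousOn w (Icc 0 T) := by
  obtain ⟨-, w', hw'int, hwrep, -⟩ := hw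
  exact (continuousOn_const.add (intervalIntegral.continuousOn_primitive hw'int)).congr hwrep

theorem sub_le_s5 (hw : IsPlayOutput ρ T u w₀ w) {t : ℝ} (ht : t ∈ Icc 0 T) :
    u t - ρ ≤ w t := by
  obtain ⟨-, -, -, -, hbound, -⟩ := hw
  linarith [(abs_le.mp (hbound t ht)).2]

theorem le_of_above_lower_boundary {s t : ℝ} (hw : IsPlayOutput ρ T u w₀ w) (hρ : 0 ≤ ρ)
    (hs : 0 ≤ s) (hst : s ≤ t) (ht : t ≤ T) (habove : ∀ r ∈ Ioc s t, u r - ρ < w r) :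
    w t ≤ w s := by
  obtain ⟨-, w', hw'int, hwrep, -, hvar⟩ := hw
  have hIoc : Ioc s t ⊆ Icc 0 T := fun r hr => ⟨hs.trans hr.1.le, hr.2.trans ht⟩
  have hderiv : ∀ᵐ r ∂(volume.restrict (Ioc s t)), w' r ≤ 0 := by
    filter_upwards [ae_restrict_of_ae_restrict_of_subset hIoc hvar,
      ae_restrict_mem measurableSet_Ioc] with r hv hr
    have := hv ρ (abs_of_nonneg hρ).le
    nlinarith [habove r hr]
  have hsplit : ∫ r in Ioc 0 t, w' r = (∫ r in Ioc 0 s, w' r) + ∫ r in Ioc s t, w' r := by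
    rw [← setIntegral_union (Ioc_disjoint_Ioc_of_le le_rfl) measurableSet_Ioc
      (hw'int.mono_set fun r hr => ⟨hr.1.le, hr.2.trans (hst.trans ht)⟩) (hw'int.mono_set hIoc),
      Ioc_union_Ioc_eq_Ioc hs hst]
  rw [hwrep t ⟨hs.trans hst, ht⟩, hwrep s ⟨hs, hst.trans ht⟩, hsplit]
  linarith [integral_nonpos_of_ae hderiv]

end IsPlayOutput

theorem play_boundary_follow_general (ρ T : ℝ) (hρ : 0 < ρ)
    (u : ℝ → ℝ) (w₀ : ℝ)
    (w : ℝ → ℝ) (hw : IsPlayOutput ρ T u w₀ w)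
    (a b : ℝ) (ha : 0 ≤ a) (hbT : b ≤ T)
    (hmono : MonotoneOn u (Set.Icc a b))
    (hstart : w a = u a - ρ) :
    ∀ t ∈ Set.Icc a b, w t = u t - ρ := by
  have hsub : Icc a b ⊆ Icc 0 T := Icc_subset_Icc ha hbT
  refine eqOn_Icc_of_monotone_barrier (hw.continuousOn.mono hsub) (hmono.add_const (-ρ))
    (fun t ht => hw.sub_le_s5 (hsub ht)) hstart ?_
  exact fun s hs t ht hst habove =>
    hw.le_of_above_lower_boundary hρ.le (hsub hs).1 hst (hsub ht).2 habove

/-- If the input `u` is nondecreasing on `[a,b] ⊆ [0,T]` and the play output starts on the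
lower boundary `w a = u a - ρ`, then the output follows the boundary: `w = u - ρ` on `[a,b]`. -/
theorem play_boundary_follow (ρ T : ℝ) (hρ : 0 < ρ) (hT : 0 ≤ T)
    (u : ℝ → ℝ) (hu : AbsContOn T u) (w₀ : ℝ) (hw₀ : |w₀ - u 0| ≤ ρ)
    (w : ℝ → ℝ) (hw : IsPlayOutput ρ T u w₀ w)
    (a b : ℝ) (ha : 0 ≤ a) (hab : a ≤ b) (hbT : b ≤ T)
    (hmono : MonotoneOn u (Set.Icc a b))
    (hstart : w a = u a - ρ) :
    ∀ t ∈ Set.Icc a b, w t = u t - ρ :=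
  play_boundary_follow_general ρ T hρ u w₀ w hw a b ha hbT hmono hstart
end

section
/- If u is absolutely continuous on [a,b] ⊆ [0,T] and |u(t) - w(a)| < ρ for all t ∈ [a,b] (where w = 𝒫[u,w₀] is the play output), then w is constant on [a,b], i.e. w(t) = w(a) for all t ∈ [a,b]. -/
open MeasureTheory Set Filter

/-!
Inside `[a, b]` the value `v = u - w a` is admissible in the variational inequality, which then
reads `w' (w - w a) ≤ 0` a.e.: the "energy" `(w - w a)²` is nonincreasing. Since `w` is absolutely
continuous, `(w t - w a)² = 2 ∫ₐᵗ w' (w - w a) ≤ 0`.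
-/

open intervalIntegral
open scoped Interval

theorem sq_intervalIntegral_eq_two_mul_integral_mul_primitive {f : ℝ → ℝ} {a b : ℝ}
    (hf : IntervalIntegrable f volume a b) :
    (∫ x in a..b, f x) ^ 2 = 2 * ∫ x in a..b, f x * ∫ y in a..x, f y := by
  set F : ℝ → ℝ := fun x ↦ ∫ y in a..x, f y
  have hF : AbsolutelyContinuousOnInterval F a b :=
    hf.absolutelyContinuousOnInterval_intervalIntegral left_mem_uIcc
  have hderiv : ∀ᵐ x, x ∈ Ι a b → deriv F x * F x + F x * deriv F x = 2 * (f x * F x) := by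
    filter_upwards [hf.ae_hasDerivAt_integral] with x hx hxab
    rw [(hx (uIoc_subset_uIcc hxab) a left_mem_uIcc).deriv]
    ring
  have hFTC := hF.integral_deriv_mul_eq_sub hF
  rw [integral_congr_ae hderiv, intervalIntegral.integral_const_mul] at hFTC
  have hFa : F a = 0 := integral_same
  rw [hFTC, hFa]
  ring

theorem intervalIntegral_eq_zero_of_ae_mul_primitive_nonpos {f : ℝ → ℝ} {a b : ℝ} (hab : a ≤ b)
    (hf : IntervalIntegrable f volume a b)
    (hf_mul : ∀ᵐ x ∂volume.restrict (Icc a b), f x * ∫ y in a..x, f y ≤ 0) :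
    ∫ x in a..b, f x = 0 := by
  have hnonneg : 0 ≤ ∫ x in a..b, -(f x * ∫ y in a..x, f y) :=
    integral_nonneg_of_ae_restrict hab (hf_mul.mono fun x hx ↦ neg_nonneg.2 hx)
  rw [intervalIntegral.integral_neg] at hnonneg
  have hsq := sq_intervalIntegral_eq_two_mul_integral_mul_primitive hf
  exact pow_eq_zero_iff two_ne_zero |>.1 (le_antisymm (by linarith) (sq_nonneg _))

theorem sub_eq_intervalIntegral_of_eq_add_integral {g g' : ℝ → ℝ} {c T : ℝ}
    (hg' : IntegrableOn g' (Icc 0 T)) (hg : ∀ t ∈ Icc 0 T, g t = c + ∫ s in Ioc 0 t, g' s)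
    {s t : ℝ} (hs : s ∈ Icc 0 T) (ht : t ∈ Icc 0 T) :
    g t - g s = ∫ x in s..t, g' x := by
  have hint : ∀ x ∈ Icc 0 T, IntervalIntegrable g' volume 0 x := fun x hx ↦
    (intervalIntegrable_iff_integrableOn_Icc_of_le hx.1).2
      (hg'.mono_set (Icc_subset_Icc_right hx.2))
  rw [hg t ht, hg s hs, ← integral_of_le ht.1, ← integral_of_le hs.1, add_sub_add_left_eq_sub,
    integral_interval_sub_left (hint t ht) (hint s hs)]

theorem play_constant_inside_general (ρ T : ℝ)
    (u : ℝ → ℝ) (w₀ : ℝ)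
    (w : ℝ → ℝ) (hw : IsPlayOutput ρ T u w₀ w)
    (a b : ℝ) (ha : 0 ≤ a) (hbT : b ≤ T)
    (hinside : ∀ t ∈ Set.Icc a b, |u t - w a| < ρ) :
    ∀ t ∈ Set.Icc a b, w t = w a := by
  obtain ⟨-, w', hw'_int, hw_eq, -, hvar⟩ := hw
  have hab_sub : Icc a b ⊆ Icc 0 T := Icc_subset_Icc ha hbT
  have hsub_eq : ∀ x ∈ Icc a b, w x - w a = ∫ y in a..x, w' y := fun x hx ↦
    sub_eq_intervalIntegral_of_eq_add_integral hw'_int hw_eq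
      (hab_sub ⟨le_rfl, hx.1.trans hx.2⟩) (hab_sub hx)
  intro t ht
  have hat_sub : Icc a t ⊆ Icc a b := Icc_subset_Icc_right ht.2
  have hdissip : ∀ᵐ x ∂volume.restrict (Icc a t), w' x * ∫ y in a..x, w' y ≤ 0 := by
    filter_upwards [ae_restrict_of_ae_restrict_of_subset (hat_sub.trans hab_sub) hvar,
      ae_restrict_mem measurableSet_Icc] with x hvar_x hx
    have hvi := hvar_x (u x - w a) (hinside x (hat_sub hx)).le
    rw [← hsub_eq x (hat_sub hx)]
    linarith
  have hw'_at : IntervalIntegrable w' volume a t :=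
    (intervalIntegrable_iff_integrableOn_Icc_of_le ht.1).2
      (hw'_int.mono_set (hat_sub.trans hab_sub))
  have hint_zero := intervalIntegral_eq_zero_of_ae_mul_primitive_nonpos ht.1 hw'_at hdissip
  linarith [hsub_eq t ht]

/-- If the input stays strictly inside the strip around `w a` on `[a,b] ⊆ [0,T]`,
i.e. `|u t - w a| < ρ` for all `t ∈ [a,b]`, then the play output is constant on `[a,b]`. -/
theorem play_constant_inside (ρ T : ℝ) (hρ : 0 < ρ) (hT : 0 ≤ T)
    (u : ℝ → ℝ) (hu : AbsContOn T u) (w₀ : ℝ) (hw₀ : |w₀ - u 0| ≤ ρ)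
    (w : ℝ → ℝ) (hw : IsPlayOutput ρ T u w₀ w)
    (a b : ℝ) (ha : 0 ≤ a) (hab : a ≤ b) (hbT : b ≤ T)
    (hinside : ∀ t ∈ Set.Icc a b, |u t - w a| < ρ) :
    ∀ t ∈ Set.Icc a b, w t = w a :=
  play_constant_inside_general ρ T u w₀ w hw a b ha hbT hinside
end

section
/- For every piecewise constant function ū : [0,T] → ℝ and every initial state w₀, there exists a sequence of continuous piecewise linear functions (vᵏ) with (vᵏ(0), w₀) in the closed strip {|u - w| ≤ ρ} such that the play outputs uᵏ := 𝒫[vᵏ, w₀] converge to ū in L¹(0,T) as k → ∞. -/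
open MeasureTheory Set Filter

/-- `f` is piecewise constant on `[0,T]` (constant on the open pieces of a finite partition). -/
def PWConstOn (T : ℝ) {β : Type*} (f : ℝ → β) : Prop :=
  ∃ (N : ℕ) (τ : ℕ → ℝ), τ 0 = 0 ∧ τ N = T ∧ (∀ i < N, τ i < τ (i+1)) ∧
    ∀ i < N, ∃ c : β, ∀ s ∈ Set.Ioo (τ i) (τ (i+1)), f s = c

/-- `f` is continuous piecewise linear (affine) on `[0,T]`. -/
def PWLinearOn (T : ℝ) (f : ℝ → ℝ) : Prop :=
  ContinuousOn f (Set.Icc 0 T) ∧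
  ∃ (N : ℕ) (τ : ℕ → ℝ), τ 0 = 0 ∧ τ N = T ∧ (∀ i < N, τ i < τ (i+1)) ∧
    ∀ i < N, ∃ a b : ℝ, ∀ s ∈ Set.Icc (τ i) (τ (i+1)), f s = a * s + b

/-!
Fix a small `δ > 0` and let the output `w` follow `ū`, except that at each jump point `τ i` it moves
linearly from the old value to the new one during `[τ i, τ i + δ]`. The input `v = w + ρ · sign w'`
on the moving pieces, interpolated linearly on the resting ones, is continuous piecewise linear,
keeps `|v - w| ≤ ρ` and saturates the gap in the direction of motion, so `w` is the play output
of `v`. Since `w = ū` outside the intervals `[τ i, τ i + δ]` and both are bounded, `w → ū` in `L¹`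
as `δ → 0` by dominated convergence.
-/

namespace PlayApproximation

noncomputable section

open Topology

def ramp (a b t : ℝ) : ℝ := projIcc (0 : ℝ) 1 zero_le_one ((t - a) / (b - a))

-- The piecewise linear interpolation of the data `(σ m, y m)`, `m ≤ M`.
def interp (σ y : ℕ → ℝ) (M : ℕ) (t : ℝ) : ℝ :=
  y 0 + ∑ m ∈ Finset.range M, (y (m + 1) - y m) * ramp (σ m) (σ (m + 1)) t

def stepFun (σ a : ℕ → ℝ) (M : ℕ) (t : ℝ) : ℝ :=
  ∑ m ∈ Finset.range M, (Ioc (σ m) (σ (m + 1))).indicator (fun _ => a m) t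

def interpDeriv (σ y : ℕ → ℝ) (M : ℕ) : ℝ → ℝ :=
  stepFun σ (fun m => (y (m + 1) - y m) / (σ (m + 1) - σ m)) M

section Ramp

variable {a b t : ℝ}

lemma ramp_of_le_left (ht : t ≤ a) (hab : a < b) : ramp a b t = 0 := by
  rw [ramp, projIcc_of_le_left zero_le_one
    (div_nonpos_of_nonpos_of_nonneg (by linarith) (by linarith))]

lemma ramp_of_right_le (ht : b ≤ t) (hab : a < b) : ramp a b t = 1 := by
  rw [ramp, projIcc_of_right_le zero_le_one ((one_le_div (by linarith)).2 (by linarith))]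

lemma ramp_of_mem (ht : t ∈ Icc a b) (hab : a < b) : ramp a b t = (t - a) / (b - a) := by
  rw [ramp, projIcc_of_mem _ ⟨div_nonneg (by linarith [ht.1]) (by linarith),
    (div_le_one (by linarith)).2 (by linarith [ht.2])⟩]

lemma ramp_mem_Icc : ramp a b t ∈ Icc 0 1 := Subtype.prop _

lemma continuous_ramp : Continuous (ramp a b) :=
  continuous_subtype_val.comp <| continuous_projIcc.comp <| by fun_prop

lemma setIntegral_Ioc_indicator_Ioc {c : ℝ} (hca : c ≤ a) (hab : a < b) (κ : ℝ) :
    ∫ s in Ioc c t, (Ioc a b).indicator (fun _ => κ) s = κ * (b - a) * ramp a b t := by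
  rw [integral_indicator measurableSet_Ioc, Measure.restrict_restrict measurableSet_Ioc,
    setIntegral_const, Ioc_inter_Ioc, max_eq_left hca, Real.volume_real_Ioc, smul_eq_mul]
  rcases le_total t a with hta | hat
  · rw [ramp_of_le_left hta hab, max_eq_right (by linarith [min_le_right b t])]
    ring
  rcases le_total b t with hbt | htb
  · rw [ramp_of_right_le hbt hab, min_eq_left hbt, max_eq_left (by linarith)]
    ring
  · rw [ramp_of_mem ⟨hat, htb⟩ hab, min_eq_right htb, max_eq_left (by linarith)]
    field_simp [(sub_pos.2 hab).ne']

end Ramp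

lemma mul_sign_sub_nonneg {x z ρ : ℝ} (hz : |z| ≤ ρ) : 0 ≤ x * (ρ * SignType.sign x - z) := by
  have hmul : x * z ≤ |x| * ρ :=
    (le_abs_self _).trans ((abs_mul x z).trans_le (mul_le_mul_of_nonneg_left hz (abs_nonneg x)))
  have hsign : x * (ρ * SignType.sign x - z) = ρ * |x| - x * z := by rw [← self_mul_sign]; ring
  rw [hsign]
  linarith

lemma exists_mem_Icc_succ_of_mem_Icc {σ : ℕ → ℝ} {M : ℕ} (hM : 0 < M) {t : ℝ}
    (ht : t ∈ Icc (σ 0) (σ M)) : ∃ m < M, t ∈ Icc (σ m) (σ (m + 1)) := by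
  induction M with
  | zero => omega
  | succ M ih =>
    rcases M.eq_zero_or_pos with rfl | hM'
    · exact ⟨0, Nat.one_pos, ht⟩
    rcases le_total t (σ M) with htM | htM
    · obtain ⟨m, hm, hmt⟩ := ih hM' ⟨ht.1, htM⟩
      exact ⟨m, by omega, hmt⟩
    · exact ⟨M, M.lt_succ_self, htM, ht.2⟩

lemma ae_exists_mem_Ioo_succ (σ : ℕ → ℝ) (M : ℕ) :
    ∀ᵐ t ∂volume.restrict (Icc (σ 0) (σ M)), ∃ m < M, t ∈ Ioo (σ m) (σ (m + 1)) := by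
  have hnull : volume (σ '' Iic M) = 0 := ((finite_Iic M).image σ).measure_zero _
  filter_upwards [ae_restrict_mem measurableSet_Icc,
    ae_restrict_of_ae (measure_eq_zero_iff_ae_notMem.1 hnull)] with t ht hnode
  have hM : 0 < M := Nat.pos_of_ne_zero fun hM => by
    subst hM
    exact hnode ⟨0, Nat.zero_le 0, le_antisymm ht.1 ht.2⟩
  obtain ⟨m, hm, htm⟩ := exists_mem_Icc_succ_of_mem_Icc hM ht
  refine ⟨m, hm, htm.1.lt_of_ne fun h => hnode ⟨m, hm.le, h⟩,
    htm.2.lt_of_ne fun h => hnode ⟨m + 1, hm, h.symm⟩⟩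

lemma integrable_indicator_Ioc_const (a b κ : ℝ) :
    Integrable ((Ioc a b).indicator fun _ => κ) :=
  (integrable_indicator_iff measurableSet_Ioc).2 (integrableOn_const measure_Ioc_lt_top.ne)

lemma integrable_stepFun (σ a : ℕ → ℝ) (M : ℕ) : Integrable (stepFun σ a M) :=
  integrable_finsetSum _ fun _ _ => integrable_indicator_Ioc_const _ _ _

lemma continuous_interp (σ y : ℕ → ℝ) (M : ℕ) : Continuous (interp σ y M) :=
  continuous_const.add <| continuous_finsetSum _ fun _ _ => continuous_const.mul continuous_ramp

lemma interp_add (σ y z : ℕ → ℝ) (M : ℕ) (t : ℝ) :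
    interp σ (y + z) M t = interp σ y M t + interp σ z M t := by
  simp only [interp, Pi.add_apply, add_sub_add_comm, add_mul, Finset.sum_add_distrib]
  ring

section StrictMonoOn

variable {σ : ℕ → ℝ} {M : ℕ} (hσ : StrictMonoOn σ (Iic M))
include hσ

lemma stepFun_eq_of_mem_Ioc (a : ℕ → ℝ) {m : ℕ} (hm : m < M) {t : ℝ}
    (ht : t ∈ Ioc (σ m) (σ (m + 1))) : stepFun σ a M t = a m := by
  rw [stepFun, Finset.sum_eq_single_of_mem m (Finset.mem_range.2 hm) fun j hj hjm => ?_,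
    indicator_of_mem ht]
  refine indicator_of_notMem (fun htj => ?_) _
  have hj := Finset.mem_range.1 hj
  rcases lt_or_gt_of_ne hjm with hjm | hmj
  · have := hσ.monotoneOn (show j + 1 ≤ M by omega) hm.le (show j + 1 ≤ m by omega)
    linarith [htj.2, ht.1]
  · have := hσ.monotoneOn (show m + 1 ≤ M by omega) hj.le (show m + 1 ≤ j by omega)
    linarith [htj.1, ht.2]

lemma interp_eq_of_mem_Icc (y : ℕ → ℝ) {m : ℕ} (hm : m < M) {t : ℝ}
    (ht : t ∈ Icc (σ m) (σ (m + 1))) :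
    interp σ y M t = y m + (y (m + 1) - y m) * ramp (σ m) (σ (m + 1)) t := by
  have hbefore : ∀ j ∈ Finset.range m,
      (y (j + 1) - y j) * ramp (σ j) (σ (j + 1)) t = y (j + 1) - y j := fun j hj => by
    have hj := Finset.mem_range.1 hj
    have := hσ.monotoneOn (show j + 1 ≤ M by omega) hm.le (show j + 1 ≤ m by omega)
    rw [ramp_of_right_le (by linarith [ht.1]) (hσ (show j ≤ M by omega) (show j + 1 ≤ M by omega)
      (lt_add_one j)), mul_one]
  have hafter : ∀ j ∈ Finset.Ico (m + 1) M, (y (j + 1) - y j) * ramp (σ j) (σ (j + 1)) t = 0 :=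
    fun j hj => by
    have hj := Finset.mem_Ico.1 hj
    have := hσ.monotoneOn (show m + 1 ≤ M by omega) hj.2.le hj.1
    rw [ramp_of_le_left (by linarith [ht.2]) (hσ hj.2.le (show j + 1 ≤ M by omega)
      (lt_add_one j)), mul_zero]
  rw [interp, ← Finset.sum_range_add_sum_Ico _ (show m + 1 ≤ M from hm), Finset.sum_range_succ,
    Finset.sum_congr rfl hbefore, Finset.sum_range_sub, Finset.sum_eq_zero hafter]
  ring

lemma interp_eq_add_integral (y : ℕ → ℝ) (t : ℝ) :
    interp σ y M t = y 0 + ∫ s in Ioc (σ 0) t, interpDeriv σ y M s := by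
  unfold interpDeriv stepFun
  rw [interp, integral_finsetSum _ fun m _ => (integrable_indicator_Ioc_const _ _ _).integrableOn]
  congr 1
  refine Finset.sum_congr rfl fun m hm => ?_
  have hm := Finset.mem_range.1 hm
  have hgap : σ m < σ (m + 1) := hσ hm.le hm (lt_add_one m)
  rw [setIntegral_Ioc_indicator_Ioc (hσ.monotoneOn (show 0 ≤ M by omega) hm.le m.zero_le) hgap,
    div_mul_cancel₀ _ (sub_pos.2 hgap).ne']

lemma interp_apply_node_zero (y : ℕ → ℝ) : interp σ y M (σ 0) = y 0 := by
  rw [interp_eq_add_integral hσ, Ioc_self, Measure.restrict_empty, integral_zero_measure, add_zero]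

lemma abs_interp_le {y : ℕ → ℝ} {C : ℝ} (hy : ∀ m ≤ M, |y m| ≤ C) {t : ℝ}
    (ht : t ∈ Icc (σ 0) (σ M)) : |interp σ y M t| ≤ C := by
  rcases M.eq_zero_or_pos with rfl | hM
  · simpa [interp] using hy 0 le_rfl
  obtain ⟨m, hm, htm⟩ := exists_mem_Icc_succ_of_mem_Icc hM ht
  obtain ⟨hθ0, hθ1⟩ := ramp_mem_Icc (a := σ m) (b := σ (m + 1)) (t := t)
  have hm0 := abs_le.1 (hy m hm.le)
  have hm1 := abs_le.1 (hy (m + 1) hm)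
  rw [interp_eq_of_mem_Icc hσ y hm htm, abs_le]
  constructor <;> nlinarith

lemma pwLinearOn_interp {T : ℝ} (hσ0 : σ 0 = 0) (hσM : σ M = T) (y : ℕ → ℝ) :
    PWLinearOn T (interp σ y M) := by
  refine ⟨(continuous_interp σ y M).continuousOn, M, σ, hσ0, hσM,
    fun m hm => hσ hm.le hm (lt_add_one m), fun m hm => ?_⟩
  set slope := (y (m + 1) - y m) / (σ (m + 1) - σ m)
  refine ⟨slope, y m - slope * σ m, fun t ht => ?_⟩
  rw [interp_eq_of_mem_Icc hσ y hm ht, ramp_of_mem ht (hσ hm.le hm (lt_add_one m))]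
  ring

-- On a piece where `y` is constant the output does not move; on the others the gap `u - w`
-- is the constant `ρ * sign w'`, which is what the variational inequality asks for.
lemma isPlayOutput_interp {ρ T : ℝ} (hσ0 : σ 0 = 0) (hσM : σ M = T) {y d : ℕ → ℝ}
    (hd : ∀ m ≤ M, |d m| ≤ ρ)
    (hsat : ∀ m < M,
      y (m + 1) = y m ∨ (d m = ρ * SignType.sign (y (m + 1) - y m) ∧ d (m + 1) = d m)) :
    IsPlayOutput ρ T (interp σ (y + d) M) (y 0) (interp σ y M) := by
  have hIcc : Icc (0 : ℝ) T = Icc (σ 0) (σ M) := by rw [hσ0, hσM]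
  refine ⟨hσ0 ▸ interp_apply_node_zero hσ y, interpDeriv σ y M,
    (integrable_stepFun _ _ _).integrableOn,
    fun t _ => by rw [interp_eq_add_integral hσ, hσ0], fun t ht => ?_, ?_⟩
  · rw [interp_add, add_sub_cancel_left]
    exact abs_interp_le hσ hd (hIcc ▸ ht)
  rw [hIcc]
  filter_upwards [ae_exists_mem_Ioo_succ σ M] with t ⟨m, hm, ht⟩ z hz
  rw [interpDeriv, stepFun_eq_of_mem_Ioc hσ _ hm (Ioo_subset_Ioc_self ht), interp_add,
    add_sub_cancel_left]
  rcases hsat m hm with hflat | ⟨hdm, hdm1⟩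
  · simp [hflat]
  · rw [interp_eq_of_mem_Icc hσ d hm (Ioo_subset_Icc_self ht), hdm1, sub_self, zero_mul, add_zero,
      hdm, div_mul_eq_mul_div]
    exact div_nonneg (mul_sign_sub_nonneg hz) (sub_pos.2 (hσ hm.le hm (lt_add_one m))).le

end StrictMonoOn

-- The output `rampApprox τ e δ N` moves linearly from `e i` to `e (i + 1)` on `[τ i, τ i + δ]` and
-- rests on `[τ i + δ, τ (i + 1)]`; node `2 i` is `τ i`, node `2 i + 1` is `τ i + δ`.
def rampNodes (τ : ℕ → ℝ) (δ : ℝ) (m : ℕ) : ℝ := τ (m / 2) + (m % 2 : ℕ) * δ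

def rampValues (e : ℕ → ℝ) (m : ℕ) : ℝ := e ((m + 1) / 2)

def rampGap (ρ : ℝ) (e : ℕ → ℝ) (m : ℕ) : ℝ := ρ * SignType.sign (e (m / 2 + 1) - e (m / 2))

def rampApprox (τ e : ℕ → ℝ) (δ : ℝ) (N : ℕ) : ℝ → ℝ :=
  interp (rampNodes τ δ) (rampValues e) (2 * N)

section Ramps

variable {τ e : ℕ → ℝ} {δ : ℝ} {N : ℕ}

lemma rampNodes_two_mul (i : ℕ) : rampNodes τ δ (2 * i) = τ i := by
  simp [rampNodes]

lemma rampNodes_zero : rampNodes τ δ 0 = τ 0 := rampNodes_two_mul 0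

lemma rampNodes_two_mul_add_one (i : ℕ) : rampNodes τ δ (2 * i + 1) = τ i + δ := by
  simp [rampNodes, show (2 * i + 1) / 2 = i by omega]

lemma rampValues_two_mul (i : ℕ) : rampValues e (2 * i) = e i := by
  simp [rampValues, show (2 * i + 1) / 2 = i by omega]

lemma rampValues_two_mul_add_one (i : ℕ) : rampValues e (2 * i + 1) = e (i + 1) := by
  simp [rampValues, show (2 * i + 1 + 1) / 2 = i + 1 by omega]

lemma rampGap_two_mul (ρ : ℝ) (i : ℕ) :
    rampGap ρ e (2 * i) = ρ * SignType.sign (e (i + 1) - e i) := by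
  simp [rampGap]

lemma rampGap_two_mul_add_one (ρ : ℝ) (i : ℕ) :
    rampGap ρ e (2 * i + 1) = ρ * SignType.sign (e (i + 1) - e i) := by
  simp [rampGap, show (2 * i + 1) / 2 = i by omega]

lemma abs_rampGap_le {ρ : ℝ} (hρ : 0 ≤ ρ) (m : ℕ) : |rampGap ρ e m| ≤ ρ := by
  rw [rampGap, abs_mul, abs_of_nonneg hρ]
  refine mul_le_of_le_one_right hρ ?_
  rcases lt_trichotomy (e (m / 2 + 1) - e (m / 2)) 0 with h | h | h <;> simp [h]

variable (hδ : 0 < δ) (hgap : ∀ i < N, δ < τ (i + 1) - τ i)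
include hδ hgap

lemma strictMonoOn_rampNodes : StrictMonoOn (rampNodes τ δ) (Iic (2 * N)) :=
  strictMonoOn_Iic_of_lt_succ fun m hm => by
    rw [Order.succ_eq_add_one]
    obtain ⟨i, rfl | rfl⟩ := Nat.even_or_odd' m
    · rw [rampNodes_two_mul, rampNodes_two_mul_add_one]
      linarith
    · rw [rampNodes_two_mul_add_one, show 2 * i + 1 + 1 = 2 * (i + 1) by ring, rampNodes_two_mul]
      linarith [hgap i (by omega)]

lemma rampApprox_eq_of_mem_Icc {i : ℕ} (hi : i < N) {t : ℝ} (ht : t ∈ Icc (τ i + δ) (τ (i + 1))) :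
    rampApprox τ e δ N t = e (i + 1) := by
  have hnodes : rampNodes τ δ (2 * i + 1 + 1) = τ (i + 1) := by
    rw [show 2 * i + 1 + 1 = 2 * (i + 1) by ring, rampNodes_two_mul]
  rw [rampApprox, interp_eq_of_mem_Icc (strictMonoOn_rampNodes hδ hgap) _ (m := 2 * i + 1)
    (by omega) (by rwa [rampNodes_two_mul_add_one, hnodes]),
    show 2 * i + 1 + 1 = 2 * (i + 1) by ring,
    rampValues_two_mul, rampValues_two_mul_add_one, sub_self, zero_mul, add_zero]

lemma isPlayOutput_rampApprox {ρ : ℝ} (hρ : 0 ≤ ρ) (hτ0 : τ 0 = 0) :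
    IsPlayOutput ρ (τ N) (interp (rampNodes τ δ) (rampValues e + rampGap ρ e) (2 * N)) (e 0)
      (rampApprox τ e δ N) := by
  refine isPlayOutput_interp (strictMonoOn_rampNodes hδ hgap) (rampNodes_zero.trans hτ0)
    (rampNodes_two_mul N) (fun m _ => abs_rampGap_le hρ m) fun m hm => ?_
  obtain ⟨i, rfl | rfl⟩ := Nat.even_or_odd' m
  · exact Or.inr ⟨by rw [rampValues_two_mul_add_one, rampValues_two_mul, rampGap_two_mul],
      by rw [rampGap_two_mul, rampGap_two_mul_add_one]⟩
  · exact Or.inl (by rw [show 2 * i + 1 + 1 = 2 * (i + 1) by ring, rampValues_two_mul,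
      rampValues_two_mul_add_one])

end Ramps

lemma tendsto_integral_abs_rampApprox_sub {τ e : ℕ → ℝ} {N : ℕ} {f : ℝ → ℝ}
    (hf : ∀ i < N, ∀ s ∈ Ioo (τ i) (τ (i + 1)), f s = e (i + 1)) {δ : ℕ → ℝ} (hδ : ∀ k, 0 < δ k)
    (hgap : ∀ k, ∀ i < N, δ k < τ (i + 1) - τ i) (hδlim : Tendsto δ atTop (𝓝 0)) :
    Tendsto (fun k => ∫ t in Icc (τ 0) (τ N), |rampApprox τ e (δ k) N t - f t|) atTop (𝓝 0) := by
  set C := ∑ j ∈ Finset.range (N + 1), |e j|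
  have hC : ∀ j ≤ N, |e j| ≤ C := fun j hj =>
    Finset.single_le_sum (f := fun j => |e j|) (fun _ _ => abs_nonneg _)
      (Finset.mem_range.2 (Nat.lt_succ_of_le hj))
  have hpieces := ae_exists_mem_Ioo_succ τ N
  have hmem : ∀ᵐ t ∂volume.restrict (Icc (τ 0) (τ N)), t ∈ Icc (τ 0) (τ N) :=
    ae_restrict_mem measurableSet_Icc
  have hcont : ∀ k, Continuous (rampApprox τ e (δ k) N) := fun k => continuous_interp _ _ _
  have hev : ∀ᵐ t ∂volume.restrict (Icc (τ 0) (τ N)),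
      ∀ᶠ k in atTop, rampApprox τ e (δ k) N t = f t := by
    filter_upwards [hpieces] with t ⟨i, hi, ht⟩
    filter_upwards [hδlim.eventually (gt_mem_nhds (sub_pos.2 ht.1))] with k hk
    rw [hf i hi t ht, rampApprox_eq_of_mem_Icc (hδ k) (hgap k) hi ⟨by linarith, ht.2.le⟩]
  have hf_meas : AEStronglyMeasurable f (volume.restrict (Icc (τ 0) (τ N))) :=
    aestronglyMeasurable_of_tendsto_ae atTop (fun k => (hcont k).aestronglyMeasurable)
      (hev.mono fun t ht => tendsto_nhds_of_eventually_eq ht)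
  have hbound : ∀ k, ∀ᵐ t ∂volume.restrict (Icc (τ 0) (τ N)),
      ‖|rampApprox τ e (δ k) N t - f t|‖ ≤ 2 * C := fun k => by
    filter_upwards [hpieces, hmem] with t ⟨i, hi, ht⟩ htT
    have hw : |rampApprox τ e (δ k) N t| ≤ C :=
      abs_interp_le (strictMonoOn_rampNodes (hδ k) (hgap k))
        (fun m hm => hC _ (by omega)) (by rwa [rampNodes_zero, rampNodes_two_mul])
    rw [Real.norm_eq_abs, abs_abs, hf i hi t ht]
    exact (abs_sub _ _).trans (by linarith [hC (i + 1) hi])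
  simpa using tendsto_integral_of_dominated_convergence (f := fun _ => (0 : ℝ))
    (fun _ => 2 * C) (fun k => ((hcont k).aestronglyMeasurable.sub hf_meas).norm)
    (integrable_const _) hbound
    (hev.mono fun t ht => tendsto_const_nhds.congr' (ht.mono fun k hk => by simp [hk]))

lemma exists_seq_tendsto_zero_lt_gaps {τ : ℕ → ℝ} {N : ℕ} (hτ : ∀ i < N, τ i < τ (i + 1)) :
    ∃ δ : ℕ → ℝ, (∀ k, 0 < δ k) ∧ (∀ k, ∀ i < N, δ k < τ (i + 1) - τ i) ∧
      Tendsto δ atTop (𝓝 0) := by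
  obtain ⟨δ₀, hδ₀, hpos⟩ : ∃ δ₀, (∀ i < N, δ₀ < τ (i + 1) - τ i) ∧ 0 < δ₀ :=
    ((((eventually_all_finite (finite_Iio N)).2 fun i hi =>
      eventually_lt_nhds (sub_pos.2 (hτ i hi))).filter_mono nhdsWithin_le_nhds).and
        (self_mem_nhdsWithin (s := Ioi (0 : ℝ)))).exists
  obtain ⟨δ, -, hδ, hlim⟩ := exists_seq_strictAnti_tendsto' hpos
  exact ⟨δ, fun k => (hδ k).1, fun k i hi => (hδ k).2.trans (hδ₀ i hi), hlim⟩

end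

end PlayApproximation

lemma IsPlayOutput.abs_sub_apply_zero_le {ρ T w₀ : ℝ} {u w : ℝ → ℝ} (h : IsPlayOutput ρ T u w₀ w)
    (hT : 0 ≤ T) : |w₀ - u 0| ≤ ρ := by
  obtain ⟨hw0, -, -, -, hgap, -⟩ := h
  simpa [hw0, abs_sub_comm] using hgap 0 ⟨le_rfl, hT⟩

open PlayApproximation

theorem play_L1_approximation_of_pwconst_general (ρ T : ℝ) (hρ : 0 < ρ)
    (ubar : ℝ → ℝ) (hubar : PWConstOn T ubar) (w₀ : ℝ) :
    ∃ v : ℕ → ℝ → ℝ, ∃ uk : ℕ → ℝ → ℝ,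
      (∀ k, PWLinearOn T (v k)) ∧
      (∀ k, |w₀ - v k 0| ≤ ρ) ∧
      (∀ k, IsPlayOutput ρ T (v k) w₀ (uk k)) ∧
      Filter.Tendsto (fun k => ∫ t in Set.Icc (0:ℝ) T, |uk k t - ubar t|)
        Filter.atTop (nhds 0) := by
  obtain ⟨N, τ, hτ0, rfl, hτ, hc⟩ := hubar
  choose! c hc using hc
  obtain ⟨e, rfl, he⟩ : ∃ e : ℕ → ℝ, e 0 = w₀ ∧
      ∀ i < N, ∀ s ∈ Ioo (τ i) (τ (i + 1)), ubar s = e (i + 1) :=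
    ⟨fun i => if i = 0 then w₀ else c (i - 1), rfl, fun i hi => by simpa using hc i hi⟩
  obtain ⟨δ, hδ, hgap, hδlim⟩ := exists_seq_tendsto_zero_lt_gaps hτ
  have hT : 0 ≤ τ N := by
    have hmono : StrictMonoOn τ (Iic N) :=
      strictMonoOn_Iic_of_lt_succ fun i hi => by simpa using hτ i hi
    exact hτ0 ▸ hmono.monotoneOn (Nat.zero_le N) self_mem_Iic (Nat.zero_le N)
  have hplay k := isPlayOutput_rampApprox (e := e) (hδ k) (hgap k) hρ.le hτ0
  refine ⟨fun k => interp (rampNodes τ (δ k)) (rampValues e + rampGap ρ e) (2 * N),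
    fun k => rampApprox τ e (δ k) N, fun k => ?_, fun k => (hplay k).abs_sub_apply_zero_le hT,
    hplay, hτ0 ▸ tendsto_integral_abs_rampApprox_sub he hδ hgap hδlim⟩
  exact pwLinearOn_interp (strictMonoOn_rampNodes (hδ k) (hgap k))
    (rampNodes_zero.trans hτ0) (rampNodes_two_mul N) _

/-- Approximation lemma: for every piecewise constant `ū` on `[0,T]` and every initial
state `w₀`, there exist continuous piecewise linear inputs `vᵏ`, admissible for `w₀`,
whose play outputs `uᵏ = 𝒫[vᵏ,w₀]` converge to `ū` in `L¹(0,T)`. -/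
theorem play_L1_approximation_of_pwconst (ρ T : ℝ) (hρ : 0 < ρ) (hT : 0 < T)
    (ubar : ℝ → ℝ) (hubar : PWConstOn T ubar) (w₀ : ℝ) :
    ∃ v : ℕ → ℝ → ℝ, ∃ uk : ℕ → ℝ → ℝ,
      (∀ k, PWLinearOn T (v k)) ∧
      (∀ k, |w₀ - v k 0| ≤ ρ) ∧
      (∀ k, IsPlayOutput ρ T (v k) w₀ (uk k)) ∧
      Filter.Tendsto (fun k => ∫ t in Set.Icc (0:ℝ) T, |uk k t - ubar t|)
        Filter.atTop (nhds 0) :=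
  play_L1_approximation_of_pwconst_general ρ T hρ ubar hubar w₀
end

section
/- The play operator has dense image in the space of continuous piecewise linear functions with respect to the uniform norm: for every continuous piecewise linear x : [0,T] → ℝ with x(0) = x₀, there exists a sequence of continuous piecewise linear functions vʲ with |vʲ(0) - x₀| ≤ ρ such that 𝒫[vʲ, x₀] → x in L^∞(0,T) as j → ∞. -/
open MeasureTheory Set Filter

/-!
If `x` has nodes `τ 0 < ⋯ < τ N`, let `w` follow `x` through the same node values but stay constant
for a time `δ` at the start of each cell, then move linearly to the next node value. Put
`v = w + ρ s`, where `s` is continuous piecewise linear, equal to the sign of `w'` wherever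
`w' ≠ 0`, and switches between consecutive signs during the plateaus. Then `|v - w| ≤ ρ`, and
`w` moves only where `v - w = ±ρ`, in the direction of that sign, so `w` is the play output of `v`;
moreover `|w - x| = O(δ)` uniformly, and `δ → 0` gives the approximating sequence.
-/

noncomputable section

def ramp (α β t : ℝ) : ℝ := max (min t β - α) 0

theorem ramp_of_le {α β t : ℝ} (h : t ≤ α) : ramp α β t = 0 :=
  max_eq_right (sub_nonpos.2 ((min_le_left t β).trans h))

theorem ramp_of_mem_Icc {α β t : ℝ} (h : t ∈ Icc α β) : ramp α β t = t - α := by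
  rw [ramp, min_eq_left h.2, max_eq_left (sub_nonneg.2 h.1)]

theorem ramp_of_ge {α β t : ℝ} (hαβ : α ≤ β) (h : β ≤ t) : ramp α β t = β - α := by
  rw [ramp, min_eq_right h, max_eq_left (sub_nonneg.2 hαβ)]

theorem ramp_mem_Icc {α β : ℝ} (hαβ : α ≤ β) (t : ℝ) : ramp α β t ∈ Icc 0 (β - α) :=
  ⟨le_max_right _ _, max_le (sub_le_sub_right (min_le_right t β) α) (sub_nonneg.2 hαβ)⟩

theorem continuous_ramp (α β : ℝ) : Continuous (ramp α β) := by
  unfold ramp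
  fun_prop

theorem setIntegral_indicator_const_eq_ramp {α β : ℝ} (hα : 0 ≤ α) (c t : ℝ) :
    ∫ s in Ioc 0 t, (Ioc α β).indicator (fun _ => c) s = c * ramp α β t := by
  rw [setIntegral_indicator measurableSet_Ioc, Ioc_inter_Ioc, setIntegral_const,
    Real.volume_real_Ioc, smul_eq_mul, max_eq_right hα, ramp, mul_comm]

theorem integrable_indicator_Ioc_const (α β c : ℝ) : Integrable ((Ioc α β).indicator fun _ => c) :=
  (integrable_indicator_iff measurableSet_Ioc).2 (integrableOn_const measure_Ioc_lt_top.ne)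

theorem abs_ramp_div_sub_le {p q δ t : ℝ} (hδ : 0 ≤ δ) (hδq : p + δ < q) (ht : t ∈ Icc p q) :
    |ramp (p + δ) q t / (q - (p + δ)) - (t - p) / (q - p)| ≤ δ / (q - p) := by
  have hL : 0 < q - p := by linarith
  have hL' : 0 < q - (p + δ) := by linarith
  rcases le_total t (p + δ) with h | h
  · rw [ramp_of_le h, zero_div, zero_sub, abs_neg,
      abs_of_nonneg (div_nonneg (sub_nonneg.2 ht.1) hL.le)]
    exact div_le_div_of_nonneg_right (by linarith) hL.le
  · have hdiff : (t - (p + δ)) / (q - (p + δ)) - (t - p) / (q - p)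
        = -(δ * (q - t) / (q - (p + δ)) / (q - p)) := by
      field_simp
      ring
    rw [ramp_of_mem_Icc ⟨h, ht.2⟩, hdiff, abs_neg, abs_of_nonneg (by
      have := sub_nonneg.2 ht.2
      positivity)]
    exact div_le_div_of_nonneg_right
      (div_le_of_le_mul₀ hL'.le hδ (by nlinarith)) hL.le

def IsAffineOn (s : Set ℝ) (f : ℝ → ℝ) : Prop := ∃ a b : ℝ, ∀ t ∈ s, f t = a * t + b

namespace IsAffineOn

variable {s : Set ℝ} {f g : ℝ → ℝ}

theorem const (s : Set ℝ) (c : ℝ) : IsAffineOn s fun _ => c := ⟨0, c, fun _ _ => by ring⟩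

theorem add (hf : IsAffineOn s f) (hg : IsAffineOn s g) : IsAffineOn s fun t => f t + g t := by
  obtain ⟨a, b, hf⟩ := hf
  obtain ⟨c, d, hg⟩ := hg
  exact ⟨a + c, b + d, fun t ht => by simp only [hf t ht, hg t ht]; ring⟩

theorem const_mul (hf : IsAffineOn s f) (c : ℝ) : IsAffineOn s fun t => c * f t := by
  obtain ⟨a, b, hf⟩ := hf
  exact ⟨c * a, c * b, fun t ht => by simp only [hf t ht]; ring⟩

theorem sum {ι : Type*} (u : Finset ι) {F : ι → ℝ → ℝ} (h : ∀ k ∈ u, IsAffineOn s (F k)) :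
    IsAffineOn s fun t => ∑ k ∈ u, F k t := by
  classical
  induction u using Finset.induction_on with
  | empty => simpa using const s 0
  | @insert i u hi ih =>
    simp only [Finset.sum_insert hi]
    exact (h i (u.mem_insert_self i)).add (ih fun k hk => h k (Finset.mem_insert_of_mem hk))

theorem eq_add_slope_mul {p q t : ℝ} (hf : IsAffineOn (Icc p q) f) (hpq : p < q)
    (ht : t ∈ Icc p q) : f t = f p + (f q - f p) / (q - p) * (t - p) := by
  obtain ⟨a, b, hf⟩ := hf
  rw [hf t ht, hf p (left_mem_Icc.2 hpq.le), hf q (right_mem_Icc.2 hpq.le)]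
  field_simp [sub_ne_zero.2 hpq.ne']
  ring

end IsAffineOn

theorem isAffineOn_ramp {α β p q : ℝ} (hαβ : α ≤ β) (hα : α ∉ Ioo p q) (hβ : β ∉ Ioo p q) :
    IsAffineOn (Icc p q) (ramp α β) := by
  simp only [mem_Ioo, not_and_or, not_lt] at hα hβ
  rcases hα with hα | hα
  · rcases hβ with hβ | hβ
    · exact ⟨0, β - α, fun t ht => by rw [ramp_of_ge hαβ (hβ.trans ht.1)]; ring⟩
    · exact ⟨1, -α, fun t ht => by rw [ramp_of_mem_Icc ⟨hα.trans ht.1, ht.2.trans hβ⟩]; ring⟩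
  · exact ⟨0, 0, fun t ht => by rw [ramp_of_le (ht.2.trans hα)]; ring⟩

theorem pwLinearOn_of_isAffineOn {T : ℝ} {f : ℝ → ℝ} (hf : ContinuousOn f (Icc 0 T)) {M : ℕ}
    {σ : ℕ → ℝ} (hσ0 : σ 0 = 0) (hσM : σ M = T) (hσ : ∀ m < M, σ m < σ (m + 1))
    (haff : ∀ p q, (∀ j ≤ M, σ j ∉ Ioo p q) → IsAffineOn (Icc p q) f) : PWLinearOn T f := by
  refine ⟨hf, M, σ, hσ0, hσM, hσ, fun m hm => haff _ _ fun j hj hmem => ?_⟩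
  have hmono : StrictMonoOn σ (Iic M) := strictMonoOn_Iic_of_lt_succ hσ
  have h1 : m < j := (hmono.lt_iff_lt (mem_Iic.2 hm.le) (mem_Iic.2 hj)).1 hmem.1
  have h2 : j < m + 1 := (hmono.lt_iff_lt (mem_Iic.2 hj) (mem_Iic.2 hm)).1 hmem.2
  omega

theorem eq_or_exists_mem_Ioc_of_mem_Icc {τ : ℕ → ℝ} {N : ℕ} {t : ℝ} (ht : t ∈ Icc (τ 0) (τ N)) :
    t = τ 0 ∨ ∃ i < N, t ∈ Ioc (τ i) (τ (i + 1)) := by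
  rcases ht.1.eq_or_lt with h | h
  · exact Or.inl h.symm
  · obtain ⟨i, hi, hti⟩ := mem_iUnion₂.1 (Ioc_subset_biUnion_Ioc N τ ⟨h, ht.2⟩)
    exact Or.inr ⟨i, Finset.mem_range.1 hi, hti⟩

theorem exists_pos_forall_add_lt {N : ℕ} {τ : ℕ → ℝ} (hτ : ∀ k < N, τ k < τ (k + 1)) :
    ∃ ε > 0, ∀ δ < ε, ∀ k < N, τ k + δ < τ (k + 1) := by
  induction N with
  | zero => exact ⟨1, one_pos, fun _ _ k hk => absurd hk k.not_lt_zero⟩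
  | succ N ih =>
    obtain ⟨ε, hε, h⟩ := ih fun k hk => hτ k (hk.trans N.lt_succ_self)
    refine ⟨min ε (τ (N + 1) - τ N), lt_min hε (sub_pos.2 (hτ N N.lt_succ_self)),
      fun δ hδ k hk => ?_⟩
    rcases Nat.lt_succ_iff_lt_or_eq.1 hk with hk | rfl
    · exact h δ (hδ.trans_le (min_le_left _ _)) k hk
    · linarith [min_le_right ε (τ (k + 1) - τ k)]

theorem IsPlayOutput.abs_sub_initial_le {ρ T w₀ : ℝ} {u w : ℝ → ℝ} (h : IsPlayOutput ρ T u w₀ w)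
    (hT : 0 ≤ T) : |u 0 - w₀| ≤ ρ := by
  obtain ⟨hw0, -, -, -, hρ, -⟩ := h
  simpa [hw0] using hρ 0 ⟨le_rfl, hT⟩

theorem isPlayOutput_add_mul_sign {ρ T w₀ : ℝ} {w w' s : ℝ → ℝ} (hρ : 0 ≤ ρ) (hT : 0 ≤ T)
    (hw' : IntegrableOn w' (Icc 0 T)) (hw : ∀ t ∈ Icc 0 T, w t = w₀ + ∫ r in Ioc 0 t, w' r)
    (hs : ∀ t ∈ Icc 0 T, |s t| ≤ 1)
    (hsign : ∀ t ∈ Icc 0 T, w' t ≠ 0 → s t = SignType.sign (w' t)) :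
    IsPlayOutput ρ T (fun t => w t + ρ * s t) w₀ w := by
  refine ⟨by simpa using hw 0 ⟨le_rfl, hT⟩, w', hw', hw, fun t ht => ?_,
    ae_restrict_of_forall_mem measurableSet_Icc fun t ht ξ hξ => ?_⟩
  · rw [add_sub_cancel_left, abs_mul, abs_of_nonneg hρ]
    exact mul_le_of_le_one_right hρ (hs t ht)
  · rw [add_sub_cancel_left]
    by_cases h0 : w' t = 0
    · simp [h0]
    calc 0 ≤ ρ * |w' t| - |w' t| * |ξ| := by
          nlinarith [abs_nonneg (w' t)]
      _ ≤ ρ * |w' t| - w' t * ξ := by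
          rw [← abs_mul]
          linarith [le_abs_self (w' t * ξ)]
      _ = w' t * (ρ * s t - ξ) := by
          rw [hsign t ht h0, ← self_mul_sign (w' t)]
          ring

def RampsInCells (N : ℕ) (τ α β : ℕ → ℝ) : Prop :=
  ∀ k < N, τ k ≤ α k ∧ α k < β k ∧ β k ≤ τ (k + 1)

section RampInterp

variable (N : ℕ) (y α β : ℕ → ℝ)

def rampSlope (k : ℕ) : ℝ := (y (k + 1) - y k) / (β k - α k)

/-- Constant between the ramps, and linear from `y k` to `y (k + 1)` on `[α k, β k]`. -/
def rampInterp (t : ℝ) : ℝ := y 0 + ∑ k ∈ Finset.range N, rampSlope y α β k * ramp (α k) (β k) t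

def rampInterpDeriv (t : ℝ) : ℝ :=
  ∑ k ∈ Finset.range N, (Ioc (α k) (β k)).indicator (fun _ => rampSlope y α β k) t

variable {N y α β} {τ : ℕ → ℝ} {t : ℝ} {i : ℕ}

theorem continuous_rampInterp : Continuous (rampInterp N y α β) :=
  continuous_const.add <|
    continuous_finsetSum _ fun _ _ => continuous_const.mul (continuous_ramp _ _)

theorem integrable_rampInterpDeriv : Integrable (rampInterpDeriv N y α β) :=
  integrable_finsetSum _ fun _ _ => integrable_indicator_Ioc_const _ _ _

theorem rampInterp_eq_integral (hα : ∀ k < N, 0 ≤ α k) (t : ℝ) :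
    rampInterp N y α β t = y 0 + ∫ s in Ioc 0 t, rampInterpDeriv N y α β s := by
  simp only [rampInterp, rampInterpDeriv]
  rw [integral_finsetSum _ fun k _ =>
    (integrable_indicator_Ioc_const (α k) (β k) (rampSlope y α β k)).integrableOn]
  congr 1
  exact Finset.sum_congr rfl fun k hk =>
    (setIntegral_indicator_const_eq_ramp (hα k (Finset.mem_range.1 hk)) _ _).symm

theorem isAffineOn_rampInterp {p q : ℝ} (hαβ : ∀ k < N, α k ≤ β k)
    (hpq : ∀ k < N, α k ∉ Ioo p q ∧ β k ∉ Ioo p q) : IsAffineOn (Icc p q) (rampInterp N y α β) :=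
  (IsAffineOn.const _ _).add <| IsAffineOn.sum _ fun k hk =>
    have hk := Finset.mem_range.1 hk
    (isAffineOn_ramp (hαβ k hk) (hpq k hk).1 (hpq k hk).2).const_mul _

theorem RampsInCells.apply_le (h : RampsInCells N τ α β) {j k : ℕ} (hjk : j ≤ k) (hk : k ≤ N) :
    τ j ≤ τ k :=
  (strictMonoOn_Iic_of_lt_succ fun m hm =>
    ((h m hm).1.trans_lt (h m hm).2.1).trans_le (h m hm).2.2).monotoneOn
    (mem_Iic.2 (hjk.trans hk)) (mem_Iic.2 hk) hjk

theorem rampInterp_of_le (h : RampsInCells N τ α β) (ht : t ≤ τ 0) :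
    rampInterp N y α β t = y 0 := by
  rw [rampInterp, Finset.sum_eq_zero fun k hk => ?_, add_zero]
  have hk := Finset.mem_range.1 hk
  rw [ramp_of_le (ht.trans ((h.apply_le k.zero_le hk.le).trans (h k hk).1)), mul_zero]

theorem rampInterp_eq_of_mem_Icc (h : RampsInCells N τ α β) (hi : i < N)
    (ht : t ∈ Icc (τ i) (τ (i + 1))) :
    rampInterp N y α β t = y i + rampSlope y α β i * ramp (α i) (β i) t := by
  have before : ∀ k < i, rampSlope y α β k * ramp (α k) (β k) t = y (k + 1) - y k := by
    intro k hk
    obtain ⟨-, hαβ, hβ⟩ := h k (hk.trans hi)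
    rw [ramp_of_ge hαβ.le (hβ.trans ((h.apply_le hk hi.le).trans ht.1)), rampSlope,
      div_mul_cancel₀ _ (sub_ne_zero.2 hαβ.ne')]
  have after : ∀ k ∈ Finset.Ico (i + 1) N, rampSlope y α β k * ramp (α k) (β k) t = 0 := by
    intro k hk
    obtain ⟨hik, hkN⟩ := Finset.mem_Ico.1 hk
    rw [ramp_of_le (ht.2.trans ((h.apply_le hik hkN.le).trans (h k hkN).1)), mul_zero]
  rw [rampInterp, ← Finset.sum_range_add_sum_Ico _ hi, Finset.sum_eq_zero after,
    Finset.sum_range_succ, Finset.sum_congr rfl fun k hk => before k (Finset.mem_range.1 hk),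
    Finset.sum_range_sub]
  ring

theorem rampInterp_eq_succ (h : RampsInCells N τ α β) (hi : i < N)
    (ht : t ∈ Icc (β i) (τ (i + 1))) :
    rampInterp N y α β t = y (i + 1) := by
  obtain ⟨hτα, hαβ, -⟩ := h i hi
  rw [rampInterp_eq_of_mem_Icc h hi ⟨hτα.trans (hαβ.le.trans ht.1), ht.2⟩, ramp_of_ge hαβ.le ht.1,
    rampSlope, div_mul_cancel₀ _ (sub_ne_zero.2 hαβ.ne')]
  ring

theorem abs_rampInterp_le (h : RampsInCells N τ α β) {M : ℝ} (hy : ∀ k ≤ N, |y k| ≤ M)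
    (ht : t ∈ Icc (τ 0) (τ N)) : |rampInterp N y α β t| ≤ M := by
  rcases eq_or_exists_mem_Ioc_of_mem_Icc ht with rfl | ⟨i, hi, hti⟩
  · rw [rampInterp_of_le h le_rfl]
    exact hy 0 N.zero_le
  obtain ⟨-, hαβ, -⟩ := h i hi
  have hθ : ramp (α i) (β i) t / (β i - α i) ∈ Icc (0 : ℝ) 1 := by
    obtain ⟨h0, h1⟩ := ramp_mem_Icc hαβ.le t
    exact ⟨div_nonneg h0 (sub_nonneg.2 hαβ.le), div_le_one_of_le₀ h1 (sub_nonneg.2 hαβ.le)⟩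
  have hmem := (convex_Icc (-M) M).add_smul_sub_mem (abs_le.1 (hy i hi.le))
    (abs_le.1 (hy (i + 1) hi)) hθ
  rw [rampInterp_eq_of_mem_Icc h hi (Ioc_subset_Icc_self hti), rampSlope, div_mul_comm]
  exact abs_le.2 hmem

theorem rampInterpDeriv_eq_of_ne_zero (h : RampsInCells N τ α β)
    (ht : rampInterpDeriv N y α β t ≠ 0) :
    ∃ i < N, t ∈ Ioc (α i) (β i) ∧ rampInterpDeriv N y α β t = rampSlope y α β i := by
  obtain ⟨i, hi, hne⟩ := Finset.exists_ne_zero_of_sum_ne_zero ht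
  have hti := mem_of_indicator_ne_zero hne
  have hiN := Finset.mem_range.1 hi
  refine ⟨i, hiN, hti, ?_⟩
  rw [rampInterpDeriv, Finset.sum_eq_single i (fun k hk hki => ?_) (fun hi' => absurd hi hi'),
    indicator_of_mem hti]
  have hkN := Finset.mem_range.1 hk
  refine indicator_of_notMem (fun htk => ?_) _
  rcases hki.lt_or_gt with hki | hki
  · linarith [htk.2, hti.1, (h k hkN).2.2, h.apply_le hki hiN.le, (h i hiN).1]
  · linarith [htk.1, hti.2, (h i hiN).2.2, h.apply_le hki hkN.le, (h k hkN).1]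

end RampInterp

section Plateau

variable (N : ℕ) (τ : ℕ → ℝ) (δ : ℝ) (y : ℕ → ℝ)

def plateauOutput : ℝ → ℝ := rampInterp N y (fun k => τ k + δ) fun k => τ (k + 1)

def switchSigns : ℕ → ℝ
  | 0 => 0
  | k + 1 => SignType.sign (rampSlope y (fun k => τ k + δ) (fun k => τ (k + 1)) k)

def plateauSwitch : ℝ → ℝ := rampInterp N (switchSigns τ δ y) τ fun k => τ k + δ

def interleave (m : ℕ) : ℝ := τ (m / 2) + (m % 2 : ℕ) * δ

variable {N τ δ y}

theorem rampsInCells_plateauOutput (hδ : 0 ≤ δ) (hgap : ∀ k < N, τ k + δ < τ (k + 1)) :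
    RampsInCells N τ (fun k => τ k + δ) fun k => τ (k + 1) :=
  fun k hk => ⟨le_add_of_nonneg_right hδ, hgap k hk, le_rfl⟩

theorem rampsInCells_plateauSwitch (hδ : 0 < δ) (hgap : ∀ k < N, τ k + δ < τ (k + 1)) :
    RampsInCells N τ τ fun k => τ k + δ :=
  fun k hk => ⟨le_rfl, lt_add_of_pos_right _ hδ, (hgap k hk).le⟩

theorem abs_switchSigns_le (k : ℕ) : |switchSigns τ δ y k| ≤ 1 := by
  cases k with
  | zero => simp [switchSigns]
  | succ k =>
    obtain h | h | h := lt_trichotomy (rampSlope y (τ · + δ) (τ <| · + 1) k) 0 <;>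
      simp [switchSigns, h]

theorem isPlayOutput_plateauOutput {ρ : ℝ} (hρ : 0 ≤ ρ) (hτ0 : τ 0 = 0) (hδ : 0 < δ)
    (hgap : ∀ k < N, τ k + δ < τ (k + 1)) :
    IsPlayOutput ρ (τ N) (fun t => plateauOutput N τ δ y t + ρ * plateauSwitch N τ δ y t) (y 0)
      (plateauOutput N τ δ y) := by
  have hout := rampsInCells_plateauOutput hδ.le hgap
  have hsw := rampsInCells_plateauSwitch hδ hgap
  have hτ : ∀ k ≤ N, 0 ≤ τ k := fun k hk => hτ0 ▸ hout.apply_le k.zero_le hk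
  refine isPlayOutput_add_mul_sign hρ (hτ N le_rfl) integrable_rampInterpDeriv.integrableOn
    (fun t _ => rampInterp_eq_integral (fun k hk => add_nonneg (hτ k hk.le) hδ.le) t)
    (fun t ht => abs_rampInterp_le hsw (fun k _ => abs_switchSigns_le k) (by rwa [hτ0]))
    fun t _ ht => ?_
  obtain ⟨i, hi, hti, hderiv⟩ := rampInterpDeriv_eq_of_ne_zero hout ht
  rw [hderiv, plateauSwitch, rampInterp_eq_succ hsw hi ⟨hti.1.le, hti.2⟩]
  rfl

theorem pwLinearOn_plateauInput (ρ : ℝ) (hτ0 : τ 0 = 0) (hδ : 0 < δ)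
    (hgap : ∀ k < N, τ k + δ < τ (k + 1)) :
    PWLinearOn (τ N) fun t => plateauOutput N τ δ y t + ρ * plateauSwitch N τ δ y t := by
  have hout := rampsInCells_plateauOutput hδ.le hgap
  have hsw := rampsInCells_plateauSwitch hδ hgap
  have heven : ∀ k, interleave τ δ (2 * k) = τ k := fun k => by simp [interleave]
  have hodd : ∀ k, interleave τ δ (2 * k + 1) = τ k + δ := fun k => by
    simp [interleave, show (2 * k + 1) / 2 = k by omega, Nat.add_mod]
  refine pwLinearOn_of_isAffineOn
    (continuous_rampInterp.add (continuous_const.mul continuous_rampInterp)).continuousOn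
    (σ := interleave τ δ) (M := 2 * N) (by rw [← hτ0, ← heven 0]) (heven N) (fun m hm => ?_)
    fun p q hpq => ?_
  · obtain ⟨k, rfl | rfl⟩ := Nat.even_or_odd' m
    · rw [heven, hodd]
      exact lt_add_of_pos_right _ hδ
    · rw [hodd, show 2 * k + 1 + 1 = 2 * (k + 1) by ring, heven]
      exact hgap k (by omega)
  have hτ : ∀ k ≤ N, τ k ∉ Ioo p q := fun k hk => heven k ▸ hpq _ (by omega)
  have hτδ : ∀ k < N, τ k + δ ∉ Ioo p q := fun k hk => hodd k ▸ hpq _ (by omega)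
  exact (isAffineOn_rampInterp (fun k hk => (hout k hk).2.1.le) fun k hk => ⟨hτδ k hk, hτ _ hk⟩).add
    ((isAffineOn_rampInterp (fun k hk => (hsw k hk).2.1.le)
      fun k hk => ⟨hτ k hk.le, hτδ k hk⟩).const_mul ρ)

theorem abs_plateauOutput_sub_le {x : ℝ → ℝ} (hδ : 0 < δ) (hgap : ∀ k < N, τ k + δ < τ (k + 1))
    (hx : ∀ i < N, IsAffineOn (Icc (τ i) (τ (i + 1))) x) {t : ℝ} (ht : t ∈ Icc (τ 0) (τ N)) :
    |plateauOutput N τ δ (fun k => x (τ k)) t - x t| ≤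
      (∑ k ∈ Finset.range N, |x (τ (k + 1)) - x (τ k)| / (τ (k + 1) - τ k)) * δ := by
  have hout := rampsInCells_plateauOutput hδ.le hgap
  have hL : ∀ k < N, 0 < τ (k + 1) - τ k := fun k hk => by linarith [hgap k hk]
  have hC : ∀ k ∈ Finset.range N, 0 ≤ |x (τ (k + 1)) - x (τ k)| / (τ (k + 1) - τ k) :=
    fun k hk => div_nonneg (abs_nonneg _) (hL k (Finset.mem_range.1 hk)).le
  rcases eq_or_exists_mem_Ioc_of_mem_Icc ht with rfl | ⟨i, hi, hti⟩
  · rw [plateauOutput, rampInterp_of_le hout le_rfl, sub_self, abs_zero]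
    exact mul_nonneg (Finset.sum_nonneg hC) hδ.le
  replace hti := Ioc_subset_Icc_self hti
  rw [plateauOutput, rampInterp_eq_of_mem_Icc hout hi hti,
    (hx i hi).eq_add_slope_mul (sub_pos.1 (hL i hi)) hti, rampSlope]
  calc _ = |x (τ (i + 1)) - x (τ i)| * |ramp (τ i + δ) (τ (i + 1)) t / (τ (i + 1) - (τ i + δ))
        - (t - τ i) / (τ (i + 1) - τ i)| := by
        rw [← abs_mul]
        congr 1
        ring
    _ ≤ |x (τ (i + 1)) - x (τ i)| * (δ / (τ (i + 1) - τ i)) :=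
        mul_le_mul_of_nonneg_left (abs_ramp_div_sub_le hδ.le (hgap i hi) hti) (abs_nonneg _)
    _ = |x (τ (i + 1)) - x (τ i)| / (τ (i + 1) - τ i) * δ := by ring
    _ ≤ _ := mul_le_mul_of_nonneg_right (Finset.single_le_sum hC (Finset.mem_range.2 hi)) hδ.le

end Plateau

end

theorem play_dense_image_pwlinear_general (ρ T : ℝ) (hρ : 0 < ρ)
    (x : ℝ → ℝ) (hx : PWLinearOn T x) (x₀ : ℝ) (hx₀ : x 0 = x₀) :
    ∃ v : ℕ → ℝ → ℝ, ∃ w : ℕ → ℝ → ℝ,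
      (∀ j, PWLinearOn T (v j)) ∧
      (∀ j, |v j 0 - x₀| ≤ ρ) ∧
      (∀ j, IsPlayOutput ρ T (v j) x₀ (w j)) ∧
      TendstoUniformlyOn (fun j t => w j t) x Filter.atTop (Set.Icc 0 T) := by
  obtain ⟨-, N, τ, hτ0, rfl, hτ, hpieces⟩ := hx
  subst hx₀
  obtain ⟨ε, hε, hgap⟩ := exists_pos_forall_add_lt hτ
  set δ : ℕ → ℝ := fun j => ε / ((j : ℝ) + 2)
  have hδ : ∀ j, 0 < δ j := fun j => by positivity
  have hgapδ : ∀ j, ∀ k < N, τ k + δ j < τ (k + 1) :=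
    fun j => hgap _ (div_lt_self hε (by linarith [j.cast_nonneg (α := ℝ)]))
  have hplay (j : ℕ) :=
    isPlayOutput_plateauOutput (y := fun k => x (τ k)) hρ.le hτ0 (hδ j) (hgapδ j)
  simp only [hτ0] at hplay
  have hT : 0 ≤ τ N := hτ0 ▸ (strictMonoOn_Iic_of_lt_succ hτ).monotoneOn
    (mem_Iic.2 N.zero_le) (mem_Iic.2 le_rfl) N.zero_le
  obtain ⟨C, hC⟩ : ∃ C, ∀ j, ∀ t ∈ Icc 0 (τ N),
      |plateauOutput N τ (δ j) (fun k => x (τ k)) t - x t| ≤ C * δ j :=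
    ⟨_, fun j t ht => abs_plateauOutput_sub_le (hδ j) (hgapδ j) hpieces (by rwa [hτ0])⟩
  have hlim : Tendsto (fun j => C * δ j) atTop (nhds 0) := by
    simpa [δ] using
      ((tendsto_const_div_atTop_nhds_zero_nat ε).comp (tendsto_add_atTop_nat 2)).const_mul C
  refine ⟨_, _, fun j => pwLinearOn_plateauInput ρ hτ0 (hδ j) (hgapδ j),
    fun j => (hplay j).abs_sub_initial_le hT, hplay,
    Metric.tendstoUniformlyOn_iff.2 fun η hη => ?_⟩
  filter_upwards [hlim.eventually (gt_mem_nhds hη)] with j hj t ht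
  rw [dist_comm, Real.dist_eq]
  exact (hC j t ht).trans_lt hj

/-- Density lemma: the play operator has dense image (in the uniform norm) in the space
of continuous piecewise linear functions: for every such `x` with `x 0 = x₀` there are
continuous piecewise linear inputs `vʲ`, admissible for `x₀`, with `𝒫[vʲ,x₀] → x`
uniformly on `[0,T]`. -/
theorem play_dense_image_pwlinear (ρ T : ℝ) (hρ : 0 < ρ) (hT : 0 < T)
    (x : ℝ → ℝ) (hx : PWLinearOn T x) (x₀ : ℝ) (hx₀ : x 0 = x₀) :
    ∃ v : ℕ → ℝ → ℝ, ∃ w : ℕ → ℝ → ℝ,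
      (∀ j, PWLinearOn T (v j)) ∧
      (∀ j, |v j 0 - x₀| ≤ ρ) ∧
      (∀ j, IsPlayOutput ρ T (v j) x₀ (w j)) ∧
      TendstoUniformlyOn (fun j t => w j t) x Filter.atTop (Set.Icc 0 T) :=
  play_dense_image_pwlinear_general ρ T hρ x hx x₀ hx₀
end

section
/- Let η > 0 and consider the delayed relay h_η with thresholds (-η, η): given a continuous input z : [0,T] → ℝ and initial output w₀ ∈ {-1,1} compatible with z(0), the output w : [0,T] → {-1,1} is well-defined, piecewise constant, and on any compact time interval the number of switches of w is finite; moreover between consecutive switches at times s < t with w ≡ 1 on [s,t), one has z ≥ -η on [s,t), and a switch from 1 to -1 at time t occurs only if z(t) = -η (symmetrically for switches from -1 to 1 at z(t) = η). -/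
open Set Classical

/-- The delayed relay with thresholds `a < b`, applied to a continuous input `z` with initial
output `w₀ ∈ {-1,1}`: the output at time `t` is determined by the sign of the input at the
last time in `[0,t]` at which the input exceeded one of the thresholds (`z < a` or `z > b`);
if the input never exceeded the thresholds, the output is the initial state `w₀`. -/
noncomputable def relay (a b : ℝ) (z : ℝ → ℝ) (w₀ : ℝ) (t : ℝ) : ℝ :=
  if ({s : ℝ | s ∈ Set.Icc 0 t ∧ (z s < a ∨ b < z s)}).Nonempty then
    (if b ≤ z (sSup {s : ℝ | s ∈ Set.Icc 0 t ∧ (z s < a ∨ b < z s)}) then 1 else -1)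
  else w₀

namespace RelayAux

/-- The set of times in `[0,t]` at which the input exceeds one of the thresholds. -/
def A (η : ℝ) (z : ℝ → ℝ) (t : ℝ) : Set ℝ :=
  {s : ℝ | s ∈ Set.Icc 0 t ∧ (z s < -η ∨ η < z s)}

lemma relay_eq (η : ℝ) (z : ℝ → ℝ) (w₀ t : ℝ) :
    relay (-η) η z w₀ t =
      if (A η z t).Nonempty then (if η ≤ z (sSup (A η z t)) then 1 else -1) else w₀ := rfl

lemma A_bdd (η : ℝ) (z : ℝ → ℝ) (t : ℝ) : BddAbove (A η z t) :=
  ⟨t, fun _ hx => hx.1.2⟩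

lemma A_mono (η : ℝ) (z : ℝ → ℝ) {s t : ℝ} (h : s ≤ t) : A η z s ⊆ A η z t :=
  fun x hx => ⟨⟨hx.1.1, hx.1.2.trans h⟩, hx.2⟩

lemma sSup_A_mem_Icc {η : ℝ} {z : ℝ → ℝ} {t : ℝ} (hne : (A η z t).Nonempty) :
    sSup (A η z t) ∈ Set.Icc 0 t := by
  obtain ⟨x, hx⟩ := hne
  exact ⟨le_trans hx.1.1 (le_csSup (A_bdd η z t) hx),
    csSup_le ⟨x, hx⟩ fun y hy => hy.1.2⟩

lemma values {η : ℝ} {z : ℝ → ℝ} {w₀ : ℝ} (hw₀ : w₀ = 1 ∨ w₀ = -1) (t : ℝ) :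
    relay (-η) η z w₀ t = 1 ∨ relay (-η) η z w₀ t = -1 := by
  rw [relay_eq]
  split_ifs
  · left; rfl
  · right; rfl
  · exact hw₀

lemma sign_low {η : ℝ} {z : ℝ → ℝ} {w₀ : ℝ} (hη : 0 < η) {t : ℝ} (ht : 0 ≤ t)
    (h : z t < -η) : relay (-η) η z w₀ t = -1 := by
  have htA : t ∈ A η z t := ⟨⟨ht, le_rfl⟩, Or.inl h⟩
  have hsup : sSup (A η z t) = t :=
    le_antisymm (csSup_le ⟨t, htA⟩ fun y hy => hy.1.2) (le_csSup (A_bdd η z t) htA)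
  rw [relay_eq, if_pos ⟨t, htA⟩, hsup, if_neg (by linarith)]

lemma sign_high {η : ℝ} {z : ℝ → ℝ} {w₀ : ℝ} {t : ℝ} (ht : 0 ≤ t)
    (h : η < z t) : relay (-η) η z w₀ t = 1 := by
  have htA : t ∈ A η z t := ⟨⟨ht, le_rfl⟩, Or.inr h⟩
  have hsup : sSup (A η z t) = t :=
    le_antisymm (csSup_le ⟨t, htA⟩ fun y hy => hy.1.2) (le_csSup (A_bdd η z t) htA)
  rw [relay_eq, if_pos ⟨t, htA⟩, hsup, if_pos h.le]

lemma comp {η : ℝ} {z : ℝ → ℝ} {w₀ : ℝ} (hη : 0 < η) {t : ℝ} (ht : 0 ≤ t) :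
    (relay (-η) η z w₀ t = 1 → -η ≤ z t) ∧ (relay (-η) η z w₀ t = -1 → z t ≤ η) := by
  constructor
  · intro h1
    by_contra hc
    push_neg at hc
    have := sign_low (w₀ := w₀) hη ht hc
    rw [h1] at this
    norm_num at this
  · intro h1
    by_contra hc
    push_neg at hc
    have := sign_high (w₀ := w₀) ht hc
    rw [h1] at this
    norm_num at this

lemma closure_fact {η T : ℝ} {z : ℝ → ℝ} (hz : ContinuousOn z (Set.Icc 0 T))
    {t : ℝ} (ht : t ∈ Set.Icc 0 T) (hne : (A η z t).Nonempty) :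
    z (sSup (A η z t)) ≤ -η ∨ η ≤ z (sSup (A η z t)) := by
  set C : Set ℝ := (Set.Icc 0 T ∩ z ⁻¹' Set.Iic (-η)) ∪ (Set.Icc 0 T ∩ z ⁻¹' Set.Ici η) with hC
  have hclosed : IsClosed C :=
    (hz.preimage_isClosed_of_isClosed isClosed_Icc isClosed_Iic).union
      (hz.preimage_isClosed_of_isClosed isClosed_Icc isClosed_Ici)
  have hsub : A η z t ⊆ C := by
    intro x hx
    have hxT : x ∈ Set.Icc 0 T := ⟨hx.1.1, hx.1.2.trans ht.2⟩
    rcases hx.2 with h | h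
    · exact Or.inl ⟨hxT, le_of_lt h⟩
    · exact Or.inr ⟨hxT, le_of_lt h⟩
  have hmem : sSup (A η z t) ∈ C :=
    hclosed.closure_subset_iff.2 hsub (csSup_mem_closure hne (A_bdd η z t))
  rcases hmem with h | h
  · exact Or.inl h.2
  · exact Or.inr h.2

/-- If the relay is `1` at `s` and `-1` at a later time `t`, the input dips to `-η`
somewhere in `(s, t]`. -/
lemma switchA {η T : ℝ} {z : ℝ → ℝ} {w₀ : ℝ} (hη : 0 < η)
    (hz : ContinuousOn z (Set.Icc 0 T)) {s t : ℝ}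
    (hs : s ∈ Set.Icc 0 T) (ht : t ∈ Set.Icc 0 T) (hst : s < t)
    (h1 : relay (-η) η z w₀ s = 1) (h2 : relay (-η) η z w₀ t = -1) :
    ∃ u ∈ Set.Ioc s t, z u ≤ -η := by
  rw [relay_eq] at h1 h2
  by_cases hne : (A η z t).Nonempty
  · rw [if_pos hne] at h2
    have hzt : ¬ η ≤ z (sSup (A η z t)) := by
      intro h
      rw [if_pos h] at h2
      norm_num at h2
    have hle : z (sSup (A η z t)) ≤ -η :=
      (closure_fact hz ht hne).resolve_right hzt
    have hu_mem := sSup_A_mem_Icc hne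
    have hus : s < sSup (A η z t) := by
      by_contra hle'
      push_neg at hle'
      have hsub2 : A η z t ⊆ A η z s := fun x hx =>
        ⟨⟨hx.1.1, le_trans (le_csSup (A_bdd η z t) hx) hle'⟩, hx.2⟩
      have heq : A η z s = A η z t := Set.Subset.antisymm (A_mono η z hst.le) hsub2
      have hnes : (A η z s).Nonempty := heq ▸ hne
      rw [if_pos hnes, heq, if_neg hzt] at h1
      norm_num at h1
    exact ⟨sSup (A η z t), ⟨hus, hu_mem.2⟩, hle⟩
  · rw [if_neg hne] at h2
    have hnes : ¬ (A η z s).Nonempty := fun h => hne (h.mono (A_mono η z hst.le))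
    rw [if_neg hnes, h2] at h1
    norm_num at h1

/-- If the relay is `-1` at `s` and `1` at a later time `t`, the input rises to `η`
somewhere in `(s, t]`. -/
lemma switchB {η T : ℝ} {z : ℝ → ℝ} {w₀ : ℝ} (hη : 0 < η)
    (hz : ContinuousOn z (Set.Icc 0 T)) {s t : ℝ}
    (hs : s ∈ Set.Icc 0 T) (ht : t ∈ Set.Icc 0 T) (hst : s < t)
    (h1 : relay (-η) η z w₀ s = -1) (h2 : relay (-η) η z w₀ t = 1) :
    ∃ u ∈ Set.Ioc s t, η ≤ z u := by
  rw [relay_eq] at h1 h2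
  by_cases hne : (A η z t).Nonempty
  · rw [if_pos hne] at h2
    have hge : η ≤ z (sSup (A η z t)) := by
      by_contra h
      rw [if_neg h] at h2
      norm_num at h2
    have hu_mem := sSup_A_mem_Icc hne
    have hus : s < sSup (A η z t) := by
      by_contra hle'
      push_neg at hle'
      have hsub2 : A η z t ⊆ A η z s := fun x hx =>
        ⟨⟨hx.1.1, le_trans (le_csSup (A_bdd η z t) hx) hle'⟩, hx.2⟩
      have heq : A η z s = A η z t := Set.Subset.antisymm (A_mono η z hst.le) hsub2
      have hnes : (A η z s).Nonempty := heq ▸ hne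
      rw [if_pos hnes, heq, if_pos hge] at h1
      norm_num at h1
    exact ⟨sSup (A η z t), ⟨hus, hu_mem.2⟩, hge⟩
  · rw [if_neg hne] at h2
    have hnes : ¬ (A η z s).Nonempty := fun h => hne (h.mono (A_mono η z hst.le))
    rw [if_neg hnes, h2] at h1
    norm_num at h1

/-- An alternating chain of length `m` for `f` in `(a, T]`. -/
def altOn (f : ℝ → ℝ) (a T : ℝ) (m : ℕ) : Prop :=
  ∃ s : ℕ → ℝ, (∀ i < m, s i ∈ Set.Ioc a T) ∧
    ∀ i, i + 1 < m → s i < s (i + 1) ∧ f (s i) ≠ f (s (i + 1))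

/-- A function whose alternating chains in `(a,T]` have bounded length is piecewise
constant on `[a,T]` in the partition sense. -/
lemma partition (f : ℝ → ℝ) (T : ℝ) :
    ∀ K : ℕ, ∀ a : ℝ, a ≤ T → (∀ m, altOn f a T m → m ≤ K) →
    ∃ N : ℕ, ∃ τ : ℕ → ℝ, τ 0 = a ∧ τ N = T ∧ Monotone τ ∧
      ∀ i < N, ∀ s ∈ Set.Ioo (τ i) (τ (i + 1)), ∀ t' ∈ Set.Ioo (τ i) (τ (i + 1)),
        f s = f t' := by
  intro K
  induction K with
  | zero =>
    intro a haT hb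
    have haT' : a = T := by
      by_contra h
      have h1 : altOn f a T 1 :=
        ⟨fun _ => T, fun i _ => ⟨lt_of_le_of_ne haT h, le_rfl⟩,
          fun i hi => absurd hi (by omega)⟩
      have := hb 1 h1
      omega
    exact ⟨0, fun _ => T, haT'.symm, rfl, monotone_const, fun i hi => absurd hi (by omega)⟩
  | succ K ih =>
    intro a haT hb
    set E := {t : ℝ | t ∈ Set.Icc a T ∧ ∀ u ∈ Set.Ioo a t, ∀ v ∈ Set.Ioo a t, f u = f v}
      with hE
    have haE : a ∈ E := ⟨⟨le_rfl, haT⟩, fun u hu => absurd hu.2 (not_lt.2 hu.1.le)⟩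
    have hEbdd : BddAbove E := ⟨T, fun x hx => hx.1.2⟩
    set c := sSup E with hc
    have hac : a ≤ c := le_csSup hEbdd haE
    have hcT : c ≤ T := csSup_le ⟨a, haE⟩ fun x hx => hx.1.2
    have hconst : ∀ u ∈ Set.Ioo a c, ∀ v ∈ Set.Ioo a c, f u = f v := by
      intro u hu v hv
      obtain ⟨e, he, hlt⟩ := exists_lt_of_lt_csSup ⟨a, haE⟩ (max_lt hu.2 hv.2)
      exact he.2 u ⟨hu.1, lt_of_le_of_lt (le_max_left u v) hlt⟩
        v ⟨hv.1, lt_of_le_of_lt (le_max_right u v) hlt⟩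
    have hred : ∀ m, altOn f c T m → m ≤ K := by
      intro m hm
      match m, hm with
      | 0, _ => exact Nat.zero_le K
      | (m + 1), ⟨s, hmem, hsucc⟩ =>
        have hs0 : s 0 ∈ Set.Ioc c T := hmem 0 (Nat.succ_pos m)
        have hns : s 0 ∉ E := fun h => absurd (le_csSup hEbdd h) (not_le.2 hs0.1)
        have hnc : ¬ (∀ u ∈ Set.Ioo a (s 0), ∀ v ∈ Set.Ioo a (s 0), f u = f v) := by
          intro h
          exact hns ⟨⟨le_trans hac hs0.1.le, hs0.2⟩, h⟩
        push_neg at hnc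
        obtain ⟨u, hu, v, hv, huv⟩ := hnc
        obtain ⟨w, hwI, hwne⟩ : ∃ w ∈ Set.Ioo a (s 0), f w ≠ f (s 0) := by
          by_cases h : f u = f (s 0)
          · exact ⟨v, hv, fun hh => huv (h.trans hh.symm)⟩
          · exact ⟨u, hu, h⟩
        have hchain : altOn f a T (m + 2) := by
          refine ⟨fun i => if i = 0 then w else s (i - 1), ?_, ?_⟩
          · intro i hi
            cases i with
            | zero => simpa using ⟨hwI.1, hwI.2.le.trans hs0.2⟩
            | succ j =>
              have hj := hmem j (by omega)
              simpa using ⟨lt_of_le_of_lt hac hj.1, hj.2⟩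
          · intro i hi
            cases i with
            | zero => simpa using ⟨hwI.2, hwne⟩
            | succ j =>
              have hj := hsucc j (by omega)
              simpa using hj
        have hle := hb (m + 2) hchain
        omega
    obtain ⟨N', τ', h0, hN, hmono, hconst'⟩ := ih c hcT hred
    refine ⟨N' + 1, fun i => if i = 0 then a else τ' (i - 1), by simp, by simpa using hN, ?_, ?_⟩
    · apply monotone_nat_of_le_succ
      intro i
      cases i with
      | zero => simpa [h0] using hac
      | succ j => simpa using hmono (Nat.le_succ j)
    · intro i hi s hs t' ht'
      cases i with
      | zero =>
        simp only [if_pos rfl, Nat.one_ne_zero, if_neg, Nat.sub_self] at hs ht'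
        apply hconst
        · simpa [h0] using hs
        · simpa [h0] using ht'
      | succ j =>
        have hj : j < N' := by omega
        apply hconst' j hj
        · simpa using hs
        · simpa using ht'

/-- Uniform continuity bounds the number of alternations of the relay on `[0,T]`. -/
lemma bound {η T : ℝ} {z : ℝ → ℝ} {w₀ : ℝ} (hη : 0 < η) (hT : 0 < T)
    (hz : ContinuousOn z (Set.Icc 0 T)) (hw₀ : w₀ = 1 ∨ w₀ = -1) :
    ∃ K : ℕ, ∀ m, altOn (relay (-η) η z w₀) 0 T m → m ≤ K := by
  obtain ⟨δ, hδ, hδ2⟩ :=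
    Metric.uniformContinuousOn_iff.1
      ((isCompact_Icc).uniformContinuousOn_of_continuous hz) (2 * η) (by linarith)
  refine ⟨⌈T / δ⌉₊ + 2, ?_⟩
  intro m hm
  rcases hm with ⟨s, hmem, hsucc⟩
  by_cases hm2 : m ≤ 2
  · omega
  push_neg at hm2
  have hch : ∀ i : ℕ, ∃ u : ℝ, i + 1 < m → u ∈ Set.Ioc (s i) (s (i + 1)) ∧
      ((relay (-η) η z w₀ (s (i + 1)) = 1 ∧ η ≤ z u) ∨
        (relay (-η) η z w₀ (s (i + 1)) = -1 ∧ z u ≤ -η)) := by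
    intro i
    by_cases hi : i + 1 < m
    · have hsi := hmem i (by omega)
      have hsi1 := hmem (i + 1) hi
      have hsiT : s i ∈ Set.Icc 0 T := ⟨hsi.1.le, hsi.2⟩
      have hsi1T : s (i + 1) ∈ Set.Icc 0 T := ⟨hsi1.1.le, hsi1.2⟩
      have hlt := (hsucc i hi).1
      have hne := (hsucc i hi).2
      rcases values (η := η) (z := z) hw₀ (s (i + 1)) with h1 | h1
      · have h0 : relay (-η) η z w₀ (s i) = -1 := by
          rcases values (η := η) (z := z) hw₀ (s i) with h | h
          · exact absurd (h.trans h1.symm) hne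
          · exact h
        obtain ⟨u, huI, huz⟩ := switchB hη hz hsiT hsi1T hlt h0 h1
        exact ⟨u, fun _ => ⟨huI, Or.inl ⟨h1, huz⟩⟩⟩
      · have h0 : relay (-η) η z w₀ (s i) = 1 := by
          rcases values (η := η) (z := z) hw₀ (s i) with h | h
          · exact h
          · exact absurd (h.trans h1.symm) hne
        obtain ⟨u, huI, huz⟩ := switchA hη hz hsiT hsi1T hlt h0 h1
        exact ⟨u, fun _ => ⟨huI, Or.inr ⟨h1, huz⟩⟩⟩
    · exact ⟨0, fun h => absurd h hi⟩
  choose u hu using hch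
  have humem : ∀ j, j + 1 < m → u j ∈ Set.Icc 0 T := by
    intro j hj
    exact ⟨le_of_lt (lt_trans (hmem j (by omega)).1 (hu j hj).1.1),
      le_trans (hu j hj).1.2 (hmem (j + 1) hj).2⟩
  have hstep : ∀ i, i + 2 < m → u i + δ ≤ u (i + 1) := by
    intro i hi
    have h1 := hu i (by omega)
    have h2 := hu (i + 1) (by omega)
    have horder : u i < u (i + 1) := lt_of_le_of_lt h1.1.2 h2.1.1
    have hneq := (hsucc (i + 1) (by omega)).2
    have hdist : 2 * η ≤ |z (u i) - z (u (i + 1))| := by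
      rcases h1.2 with ⟨ha, hb⟩ | ⟨ha, hb⟩ <;> rcases h2.2 with ⟨hc, hd⟩ | ⟨hc, hd⟩
      · exact absurd (ha.trans hc.symm) hneq
      · have := le_abs_self (z (u i) - z (u (i + 1)))
        linarith
      · have := neg_abs_le (z (u i) - z (u (i + 1)))
        linarith
      · exact absurd (ha.trans hc.symm) hneq
    by_contra hcon
    push_neg at hcon
    have hd1 : dist (u i) (u (i + 1)) < δ := by
      rw [Real.dist_eq, abs_lt]
      constructor <;> linarith
    have := hδ2 (u i) (humem i (by omega)) (u (i + 1)) (humem (i + 1) (by omega)) hd1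
    rw [Real.dist_eq] at this
    linarith
  have hacc : ∀ j, j + 1 < m → u 0 + (j : ℝ) * δ ≤ u j := by
    intro j
    induction j with
    | zero => intro _; simp
    | succ k ihk =>
      intro hj
      have h1 := ihk (by omega)
      have h2 := hstep k (by omega)
      push_cast
      linarith
  have hm1 : (m - 2) + 1 < m := by omega
  have hlast := hacc (m - 2) hm1
  have hu0 : 0 < u 0 := lt_trans (hmem 0 (by omega)).1 (hu 0 (by omega)).1.1
  have huT : u (m - 2) ≤ T := (humem (m - 2) hm1).2
  have hTd : ((m - 2 : ℕ) : ℝ) * δ < T := by linarith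
  have hdiv : ((m - 2 : ℕ) : ℝ) < T / δ := by
    rw [lt_div_iff₀ hδ]
    exact hTd
  have := Nat.lt_ceil.2 hdiv
  omega

end RelayAux

/-- Well-posedness of the delayed relay `h_η` with thresholds `(-η, η)`: for a continuous
input `z` and compatible initial output `w₀ ∈ {-1,1}`, the output takes values in `{-1,1}`,
starts at `w₀`, satisfies `z ≥ -η` while the output is `1` and `z ≤ η` while it is `-1`,
is piecewise constant with finitely many switches on `[0,T]`, and a switch from `1` to `-1`
(resp. `-1` to `1`) can occur at time `t` only if `z t = -η` (resp. `z t = η`). -/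
theorem relay_well_posed (η T : ℝ) (hη : 0 < η) (hT : 0 < T)
    (z : ℝ → ℝ) (hz : ContinuousOn z (Set.Icc 0 T))
    (w₀ : ℝ) (hw₀ : w₀ = 1 ∨ w₀ = -1)
    (hcompat : (w₀ = 1 → -η ≤ z 0) ∧ (w₀ = -1 → z 0 ≤ η)) :
    (relay (-η) η z w₀ 0 = w₀) ∧
    (∀ t ∈ Set.Icc (0:ℝ) T, relay (-η) η z w₀ t = 1 ∨ relay (-η) η z w₀ t = -1) ∧
    (∀ t ∈ Set.Icc (0:ℝ) T,
      (relay (-η) η z w₀ t = 1 → -η ≤ z t) ∧ (relay (-η) η z w₀ t = -1 → z t ≤ η)) ∧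
    (∃ (N : ℕ) (τ : ℕ → ℝ), τ 0 = 0 ∧ τ N = T ∧ Monotone τ ∧
      ∀ i < N, ∀ s ∈ Set.Ioo (τ i) (τ (i+1)), ∀ t' ∈ Set.Ioo (τ i) (τ (i+1)),
        relay (-η) η z w₀ s = relay (-η) η z w₀ t') ∧
    (∀ t ∈ Set.Ico (0:ℝ) T, relay (-η) η z w₀ t = 1 →
      (∀ ε > 0, ∃ t' ∈ Set.Ioc t (min (t + ε) T), relay (-η) η z w₀ t' = -1) →
      z t = -η) ∧
    (∀ t ∈ Set.Ico (0:ℝ) T, relay (-η) η z w₀ t = -1 →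
      (∀ ε > 0, ∃ t' ∈ Set.Ioc t (min (t + ε) T), relay (-η) η z w₀ t' = 1) →
      z t = η) := by
  open RelayAux in
  have init : relay (-η) η z w₀ 0 = w₀ := by
    rw [RelayAux.relay_eq]
    by_cases hne : (RelayAux.A η z 0).Nonempty
    · obtain ⟨x, hx⟩ := hne
      have hx0 : x = 0 := le_antisymm hx.1.2 hx.1.1
      subst hx0
      have hsup : sSup (RelayAux.A η z 0) = 0 :=
        le_antisymm (csSup_le ⟨0, hx⟩ fun y hy => hy.1.2)
          (le_csSup (RelayAux.A_bdd η z 0) hx)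
      rw [if_pos ⟨0, hx⟩, hsup]
      rcases hw₀ with h | h
      · have hge := hcompat.1 h
        have hgt : η < z 0 := hx.2.resolve_left (not_lt.2 hge)
        rw [if_pos hgt.le, h]
      · have hle := hcompat.2 h
        have hlt : z 0 < -η := hx.2.resolve_right (not_lt.2 hle)
        rw [if_neg (by linarith), h]
    · rw [if_neg hne]
  refine ⟨init, fun t _ => RelayAux.values hw₀ t,
    fun t ht => RelayAux.comp hη ht.1, ?_, ?_, ?_⟩
  · obtain ⟨K, hK⟩ := RelayAux.bound hη hT hz hw₀
    exact RelayAux.partition (relay (-η) η z w₀) T K 0 hT.le hK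
  · intro t ht h1 hsw
    have hge : -η ≤ z t := (RelayAux.comp hη ht.1).1 h1
    by_contra hne'
    have hlt : -η < z t := lt_of_le_of_ne hge (Ne.symm hne')
    have hct : ContinuousWithinAt z (Set.Icc 0 T) t := hz t ⟨ht.1, ht.2.le⟩
    obtain ⟨δ, hδ, hδ2⟩ := Metric.continuousWithinAt_iff.1 hct (z t + η) (by linarith)
    obtain ⟨t', ht', hrt'⟩ := hsw (δ / 2) (by linarith)
    have htT : t' ∈ Set.Icc 0 T :=
      ⟨le_trans ht.1 ht'.1.le, le_trans ht'.2 (min_le_right _ _)⟩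
    obtain ⟨u, huI, huz⟩ := RelayAux.switchA hη hz ⟨ht.1, ht.2.le⟩ htT ht'.1 h1 hrt'
    have humem : u ∈ Set.Icc 0 T := ⟨le_trans ht.1 huI.1.le, le_trans huI.2 htT.2⟩
    have htd : t' ≤ t + δ / 2 := le_trans ht'.2 (min_le_left _ _)
    have hud : dist u t < δ := by
      rw [Real.dist_eq, abs_lt]
      constructor
      · linarith [huI.1]
      · linarith [huI.2]
    have hzd := hδ2 humem hud
    rw [Real.dist_eq] at hzd
    have := abs_lt.1 hzd
    linarith [this.1]
  · intro t ht h1 hsw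
    have hle : z t ≤ η := (RelayAux.comp hη ht.1).2 h1
    by_contra hne'
    have hlt : z t < η := lt_of_le_of_ne hle hne'
    have hct : ContinuousWithinAt z (Set.Icc 0 T) t := hz t ⟨ht.1, ht.2.le⟩
    obtain ⟨δ, hδ, hδ2⟩ := Metric.continuousWithinAt_iff.1 hct (η - z t) (by linarith)
    obtain ⟨t', ht', hrt'⟩ := hsw (δ / 2) (by linarith)
    have htT : t' ∈ Set.Icc 0 T :=
      ⟨le_trans ht.1 ht'.1.le, le_trans ht'.2 (min_le_right _ _)⟩
    obtain ⟨u, huI, huz⟩ := RelayAux.switchB hη hz ⟨ht.1, ht.2.le⟩ htT ht'.1 h1 hrt'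
    have humem : u ∈ Set.Icc 0 T := ⟨le_trans ht.1 huI.1.le, le_trans huI.2 htT.2⟩
    have htd : t' ≤ t + δ / 2 := le_trans ht'.2 (min_le_left _ _)
    have hud : dist u t < δ := by
      rw [Real.dist_eq, abs_lt]
      constructor
      · linarith [huI.1]
      · linarith [huI.2]
    have hzd := hδ2 humem hud
    rw [Real.dist_eq] at hzd
    have := abs_lt.1 hzd
    linarith [this.2]
end

section
/- Let k ≥ 1 and for i = 1,…,k let hᵢ be the delayed relay with thresholds (-1 + i/k, i/k). Define the macroscopic output w_k[ζ](t) = (1/k)·Σᵢ hᵢ[ζ](t) for a continuous input ζ. If at some time τ the relay output states satisfy the monotone-ordering condition (there is i_k^τ with hᵢ[ζ](τ) = 1 for i < i_k^τ and hᵢ[ζ](τ) = -1 for i > i_k^τ), then this ordering condition persists for all t ≥ τ, and the map from the value of w_k(t) to the k-tuple (h₁[ζ](t),…,h_k[ζ](t)) is a bijection onto the set of k-tuples of the form (1,…,1,-1,…,-1); in particular w_k takes exactly the k+1 values {-1, -1+2/k, …, 1-2/k, 1}. -/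
open Set Classical

/-!
Relay `i` has thresholds `(aᵢ, aᵢ + 1)` with `aᵢ` increasing in `i`, and the point is that a
relay with higher thresholds can be on only if every relay with lower thresholds is on too.
If the higher relay last switched at time `s'`, it switched on, so the input there exceeds both
upper thresholds; after `s'` the input never drops below the higher lower threshold, hence never
below the lower one, so the lower relay's last switch is a switch on as well. If the higher
relay has never switched, the input stayed above both lower thresholds, so the lower relay keeps
its state from time `τ`, where the ordering hypothesis says it was on. Thus the relays that are
on form an initial segment `{0, …, j-1}`, and the average of the outputs is `-1 + 2j/k`.
-/

def switchTimes (z : ℝ → ℝ) (a b t : ℝ) : Set ℝ :=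
  {s : ℝ | s ∈ Icc 0 t ∧ (z s < a ∨ b < z s)}

section Relay

variable {z : ℝ → ℝ} {a b a' b' w w' τ t : ℝ}

lemma relay_eq_ite (z : ℝ → ℝ) (a b w t : ℝ) :
    relay a b z w t =
      if (switchTimes z a b t).Nonempty then
        (if b ≤ z (sSup (switchTimes z a b t)) then 1 else -1)
      else w := rfl

lemma relay_eq_one_iff_of_nonempty (hne : (switchTimes z a b t).Nonempty) :
    relay a b z w t = 1 ↔ b ≤ z (sSup (switchTimes z a b t)) := by
  rw [relay_eq_ite, if_pos hne]
  split_ifs with h <;> norm_num [h]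

lemma relay_of_switchTimes_eq_empty (h : switchTimes z a b t = ∅) : relay a b z w t = w := by
  rw [relay_eq_ite, if_neg (not_nonempty_iff_eq_empty.mpr h)]

lemma relay_eq_one_or_eq_neg_one (hw : w = 1 ∨ w = -1) :
    relay a b z w t = 1 ∨ relay a b z w t = -1 := by
  rw [relay_eq_ite]
  split_ifs <;> simp [hw]

lemma switchTimes_mono (hτt : τ ≤ t) : switchTimes z a b τ ⊆ switchTimes z a b t :=
  fun _ ⟨hs, hz⟩ => ⟨⟨hs.1, hs.2.trans hτt⟩, hz⟩

lemma switchTimes_bddAbove : BddAbove (switchTimes z a b t) :=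
  ⟨t, fun _ hs => hs.1.2⟩

lemma sSup_switchTimes_mem {C : Set ℝ} (hC : IsClosed C) (hsub : switchTimes z a b t ⊆ C)
    (hne : (switchTimes z a b t).Nonempty) : sSup (switchTimes z a b t) ∈ C :=
  closure_minimal hsub hC (csSup_mem_closure hne switchTimes_bddAbove)

lemma relay_eq_one_of_le_input (hz : Continuous z) (hτt : τ ≤ t)
    (hza : ∀ s ∈ Icc 0 t, a ≤ z s) (hτ : relay a b z w τ = 1) : relay a b z w t = 1 := by
  rcases (switchTimes z a b t).eq_empty_or_nonempty with hem | hne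
  · have hemτ : switchTimes z a b τ = ∅ := subset_empty_iff.mp (hem ▸ switchTimes_mono hτt)
    rw [relay_of_switchTimes_eq_empty hemτ] at hτ
    rwa [relay_of_switchTimes_eq_empty hem]
  · have hsub : switchTimes z a b t ⊆ z ⁻¹' Ici b := fun s ⟨hs, hzs⟩ =>
      le_of_lt (hzs.resolve_left (not_lt.mpr (hza s hs)))
    exact (relay_eq_one_iff_of_nonempty hne).mpr
      (sSup_switchTimes_mem (isClosed_Ici.preimage hz) hsub hne)

lemma relay_eq_one_of_higher_switched (hz : Continuous z) (ha : a ≤ a') (hb : b < b')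
    (hne' : (switchTimes z a' b' t).Nonempty) (h' : relay a' b' z w' t = 1) :
    relay a b z w t = 1 := by
  set S := switchTimes z a b t
  set s' := sSup (switchTimes z a' b' t)
  have hs'on : b' ≤ z s' := (relay_eq_one_iff_of_nonempty hne').mp h'
  have hs'S : s' ∈ S :=
    ⟨sSup_switchTimes_mem isClosed_Icc (fun _ hs => hs.1) hne', Or.inr (hb.trans_le hs'on)⟩
  have hne : S.Nonempty := ⟨s', hs'S⟩
  have hs's : s' ≤ sSup S := le_csSup switchTimes_bddAbove hs'S
  -- after `s'` the input never drops below `a'`, so a switch of the lower relay is a switch on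
  have hsub : S ⊆ Iic s' ∪ z ⁻¹' Ici b := by
    intro s hs
    by_cases hss' : s ≤ s'
    · exact Or.inl hss'
    · have hsS' : s ∉ switchTimes z a' b' t := fun h =>
        hss' (le_csSup switchTimes_bddAbove h)
      have hza : a ≤ z s := ha.trans (not_lt.mp fun h => hsS' ⟨hs.1, Or.inl h⟩)
      exact Or.inr (le_of_lt (hs.2.resolve_left (not_lt.mpr hza)))
  rw [relay_eq_one_iff_of_nonempty hne]
  rcases sSup_switchTimes_mem (isClosed_Iic.union (isClosed_Ici.preimage hz)) hsub hne with
    hle | hge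
  · rw [le_antisymm hle hs's]
    exact hb.le.trans hs'on
  · exact hge

lemma relay_eq_one_of_higher (hz : Continuous z) (hτt : τ ≤ t) (ha : a ≤ a') (hb : b < b')
    (hτ : relay a' b' z w' τ = 1 → relay a b z w τ = 1) (h' : relay a' b' z w' t = 1) :
    relay a b z w t = 1 := by
  rcases (switchTimes z a' b' t).eq_empty_or_nonempty with hem | hne'
  · have hemτ : switchTimes z a' b' τ = ∅ :=
      subset_empty_iff.mp (hem ▸ switchTimes_mono hτt)
    have hza : ∀ s ∈ Icc 0 t, a ≤ z s := fun s hs =>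
      ha.trans (not_lt.mp fun h => eq_empty_iff_forall_notMem.mp hem s ⟨hs, Or.inl h⟩)
    rw [relay_of_switchTimes_eq_empty hem] at h'
    refine relay_eq_one_of_le_input hz hτt hza (hτ ?_)
    rwa [relay_of_switchTimes_eq_empty hemτ]
  · exact relay_eq_one_of_higher_switched hz ha hb hne' h'

end Relay

section Staircase

variable {k : ℕ} {f : Fin k → ℝ}

lemma eq_one_of_lt_of_eq_one
    (hord : ∃ i₀ : ℕ, ∀ i : Fin k, (i.1 + 1 < i₀ → f i = 1) ∧ (i₀ < i.1 + 1 → f i = -1))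
    {i i' : Fin k} (hii' : i < i') (hi' : f i' = 1) : f i = 1 := by
  obtain ⟨i₀, hi₀⟩ := hord
  have hi'i₀ : i'.1 + 1 ≤ i₀ := by
    by_contra! hlt
    norm_num [(hi₀ i').2 hlt] at hi'
  exact (hi₀ i).1 (by omega)

lemma exists_staircase (hf : ∀ i, f i = 1 ∨ f i = -1)
    (hon : ∀ i i', i ≤ i' → f i' = 1 → f i = 1) :
    ∃ j ≤ k, ∀ i : Fin k, f i = if i.1 < j then 1 else -1 := by
  set S := Finset.univ.filter fun i => f i = 1
  refine ⟨S.card, (Finset.card_filter_le _ _).trans_eq (Finset.card_fin k), fun i => ?_⟩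
  by_cases hi : f i = 1
  · have hsub : Finset.Iic i ⊆ S := fun m hm =>
      Finset.mem_filter.mpr ⟨Finset.mem_univ m, hon m i (Finset.mem_Iic.mp hm) hi⟩
    have := Finset.card_le_card hsub
    rw [Fin.card_Iic] at this
    rw [hi, if_pos (by omega)]
  · have hsub : S ⊆ Finset.Iio i := fun m hm => Finset.mem_Iio.mpr <| lt_of_not_ge
      fun him => hi (hon i m him (Finset.mem_filter.mp hm).2)
    have := Finset.card_le_card hsub
    rw [Fin.card_Iio] at this
    rw [(hf i).resolve_left hi, if_neg (by omega)]

lemma sum_staircase {j : ℕ} (hj : j ≤ k) :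
    ∑ i : Fin k, (if i.1 < j then (1 : ℝ) else -1) = 2 * j - k := by
  rw [Fin.sum_univ_eq_sum_range (fun i => if i < j then (1 : ℝ) else -1),
    ← Finset.sum_range_add_sum_Ico _ hj,
    Finset.sum_congr rfl fun i hi => if_pos (Finset.mem_range.mp hi),
    Finset.sum_congr rfl fun i hi => if_neg (Finset.mem_Ico.mp hi).1.not_gt]
  simp [Nat.cast_sub hj]
  ring

end Staircase

theorem relay_superposition_staircase_general (k : ℕ) (hk : 1 ≤ k)
    (ζ : ℝ → ℝ) (hζ : Continuous ζ)
    (w₀ : Fin k → ℝ) (hw₀ : ∀ i, w₀ i = 1 ∨ w₀ i = -1)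
    (h : Fin k → ℝ → ℝ)
    (hh : ∀ i : Fin k,
      h i = relay (-1 + ((i.1 + 1 : ℕ) : ℝ) / k) (((i.1 + 1 : ℕ) : ℝ) / k) ζ (w₀ i))
    (wk : ℝ → ℝ) (hwk : ∀ t, wk t = (1 / (k : ℝ)) * ∑ i, h i t)
    (τ : ℝ)
    (hord : ∃ i₀ : ℕ, ∀ i : Fin k,
      (i.1 + 1 < i₀ → h i τ = 1) ∧ (i₀ < i.1 + 1 → h i τ = -1)) :
    (∀ t, τ ≤ t → ∃ j ≤ k,
      (∀ i : Fin k, h i t = if i.1 < j then 1 else -1) ∧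
      wk t = -1 + 2 * (j : ℝ) / k) ∧
    (∀ j j' : ℕ, j ≤ k → j' ≤ k →
      -1 + 2 * (j : ℝ) / k = -1 + 2 * (j' : ℝ) / k → j = j') := by
  have hk0 : (0 : ℝ) < k := by exact_mod_cast hk
  have hupper : ∀ i i' : Fin k, i < i' → ((i.1 + 1 : ℕ) : ℝ) / k < ((i'.1 + 1 : ℕ) : ℝ) / k :=
    fun i i' hii' => by gcongr; exact Fin.lt_def.mp hii'
  have hon : ∀ t, τ ≤ t → ∀ i i' : Fin k, i ≤ i' → h i' t = 1 → h i t = 1 := by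
    intro t ht i i' hii' hi'
    rcases hii'.eq_or_lt with rfl | hlt
    · exact hi'
    have hordτ := eq_one_of_lt_of_eq_one (f := fun i => h i τ) hord hlt
    simp only [hh] at hi' hordτ ⊢
    have hb := hupper i i' hlt
    exact relay_eq_one_of_higher hζ ht (by linarith) hb hordτ hi'
  refine ⟨fun t ht => ?_, fun j j' _ _ heq => ?_⟩
  · have hval : ∀ i, h i t = 1 ∨ h i t = -1 := fun i =>
      hh i ▸ relay_eq_one_or_eq_neg_one (hw₀ i)
    obtain ⟨j, hjk, hj⟩ := exists_staircase hval (hon t ht)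
    refine ⟨j, hjk, hj, ?_⟩
    rw [hwk, Finset.sum_congr rfl fun i _ => hj i, sum_staircase hjk]
    field_simp
    ring
  · have : (j : ℝ) = j' := by
      field_simp at heq
      linarith
    exact_mod_cast this

/-- Superposition of `k` delayed relays with thresholds `(-1 + i/k, i/k)`, `i = 1,…,k`:
if at some time `τ` the relay outputs are ordered (`1` for small indices, `-1` for large
ones), then this ordering persists for all `t ≥ τ`; at every such time the tuple of relay
outputs is of the staircase form `(1,…,1,-1,…,-1)` and the macroscopic output
`w_k = (1/k) Σᵢ hᵢ` equals `-1 + 2j/k` where `j` is the number of relays that are on;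
moreover `j ↦ -1 + 2j/k` is injective on `{0,…,k}`, so `w_k` determines the tuple and
takes exactly the `k+1` values `-1, -1 + 2/k, …, 1`. -/
theorem relay_superposition_staircase (k : ℕ) (hk : 1 ≤ k)
    (ζ : ℝ → ℝ) (hζ : Continuous ζ)
    (w₀ : Fin k → ℝ) (hw₀ : ∀ i, w₀ i = 1 ∨ w₀ i = -1)
    (hcompat : ∀ i : Fin k,
      (w₀ i = 1 → -1 + ((i.1 + 1 : ℕ) : ℝ) / k ≤ ζ 0) ∧
      (w₀ i = -1 → ζ 0 ≤ ((i.1 + 1 : ℕ) : ℝ) / k))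
    (h : Fin k → ℝ → ℝ)
    (hh : ∀ i : Fin k,
      h i = relay (-1 + ((i.1 + 1 : ℕ) : ℝ) / k) (((i.1 + 1 : ℕ) : ℝ) / k) ζ (w₀ i))
    (wk : ℝ → ℝ) (hwk : ∀ t, wk t = (1 / (k : ℝ)) * ∑ i, h i t)
    (τ : ℝ) (hτ : 0 ≤ τ)
    (hord : ∃ i₀ : ℕ, ∀ i : Fin k,
      (i.1 + 1 < i₀ → h i τ = 1) ∧ (i₀ < i.1 + 1 → h i τ = -1)) :
    (∀ t, τ ≤ t → ∃ j ≤ k,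
      (∀ i : Fin k, h i t = if i.1 < j then 1 else -1) ∧
      wk t = -1 + 2 * (j : ℝ) / k) ∧
    (∀ j j' : ℕ, j ≤ k → j' ≤ k →
      -1 + 2 * (j : ℝ) / k = -1 + 2 * (j' : ℝ) / k → j = j') :=
  relay_superposition_staircase_general k hk ζ hζ w₀ hw₀ h hh wk hwk τ hord
end
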